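/- arXiv:1408.2379 — 5 statements merged into one kernel-verified Lean document; each statement's English description precedes it below -/
import Mathlib

section
/- Let f : ℝⁿ → ℝ be Lipschitz with Lipschitz constant L, let x ∈ ℝⁿ, let W, W' be linear subspaces of ℝⁿ, let α, α' be linear functionals on ℝⁿ, and let δ > 0. Define m(f,x,W,α,δ) := sup { |f(x+h) − f(x) − α h| / |h| : h ∈ W, 0 < |h| ≤ δ }, and similarly m' := m(f,x,W',α',δ). Then m ≤ m' + ‖α' − α‖ + (L + ‖α'‖)·d, where d := d_gr(W,W') is the Grassmannian distance between W and W' (the smallest d ≥ 0 such that every unit vector of each subspace is within distance d of the other subspace) and ‖·‖ denotes the operator norm of a linear functional. -/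
open Metric Set

/-- The deviation `m(f,x,W,α,δ)` of `f` from the linear functional `α` around `x`,
measured along the subspace `W` at scale `δ`. -/
noncomputable def devLin {n : ℕ} (f : EuclideanSpace ℝ (Fin n) → ℝ)
    (x : EuclideanSpace ℝ (Fin n)) (W : Submodule ℝ (EuclideanSpace ℝ (Fin n)))
    (α : EuclideanSpace ℝ (Fin n) →L[ℝ] ℝ) (δ : ℝ) : ℝ :=
  sSup ((fun h => |f (x + h) - f x - α h| / ‖h‖) ''
    {h : EuclideanSpace ℝ (Fin n) | h ∈ W ∧ 0 < ‖h‖ ∧ ‖h‖ ≤ δ})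

/-- The Grassmannian distance between two subspaces, i.e. the Hausdorff distance between
their intersections with the closed unit ball. -/
noncomputable def grDist {n : ℕ} (W W' : Submodule ℝ (EuclideanSpace ℝ (Fin n))) : ℝ :=
  Metric.hausdorffDist ((W : Set (EuclideanSpace ℝ (Fin n))) ∩ closedBall 0 1)
    ((W' : Set (EuclideanSpace ℝ (Fin n))) ∩ closedBall 0 1)

/-!
Given `h ∈ W` with `0 < ‖h‖ ≤ δ`, rescale the unit vector `h / ‖h‖` to a point of
`W' ∩ closedBall 0 1` at distance at most `d = d_gr(W, W')`; this gives `h' ∈ W'` with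
`‖h'‖ ≤ ‖h‖` and `‖h - h'‖ ≤ d ‖h‖`. Then `f(x+h) - f x - α h` differs from
`f(x+h') - f x - α' h'` by at most `(L + ‖α'‖) ‖h - h'‖ + ‖α' - α‖ ‖h‖`, and the second
quantity is at most `m' ‖h'‖ ≤ m' ‖h‖`.
-/

section Approximation

variable {E : Type*} [NormedAddCommGroup E] [NormedSpace ℝ E]

lemma abs_sub_sub_le_of_lipschitzWith {f : E → ℝ} {L : NNReal} (hf : LipschitzWith L f)
    (x h h' : E) (α α' : E →L[ℝ] ℝ) :
    |f (x + h) - f x - α h| ≤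
      |f (x + h') - f x - α' h'| + ((L : ℝ) + ‖α'‖) * ‖h - h'‖ + ‖α' - α‖ * ‖h‖ := by
  have hlip : |f (x + h) - f (x + h')| ≤ L * ‖h - h'‖ := by
    simpa [Real.dist_eq, dist_add_left, dist_eq_norm] using hf.dist_le_mul (x + h) (x + h')
  have hα' : |α' h' - α' h| ≤ ‖α'‖ * ‖h - h'‖ := by
    simpa [norm_sub_rev h'] using α'.le_opNorm (h' - h)
  have hαα' : |α' h - α h| ≤ ‖α' - α‖ * ‖h‖ := by simpa using (α' - α).le_opNorm h
  calc |f (x + h) - f x - α h|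
      = |(f (x + h) - f (x + h')) + (f (x + h') - f x - α' h') + (α' h' - α' h)
          + (α' h - α h)| := by ring_nf
    _ ≤ |f (x + h) - f (x + h')| + |f (x + h') - f x - α' h'| + |α' h' - α' h|
          + |α' h - α h| :=
        (abs_add_le _ _).trans <| add_le_add_left
          ((abs_add_le _ _).trans <| add_le_add_left (abs_add_le _ _) _) _
    _ ≤ L * ‖h - h'‖ + |f (x + h') - f x - α' h'| + ‖α'‖ * ‖h - h'‖ + ‖α' - α‖ * ‖h‖ := by
      gcongr
    _ = _ := by ring

variable [FiniteDimensional ℝ E]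

lemma exists_mem_dist_le_hausdorffDist_unitBall (W W' : Submodule ℝ E) {u : E}
    (hu : u ∈ (W : Set E) ∩ closedBall 0 1) :
    ∃ u' ∈ (W' : Set E) ∩ closedBall 0 1,
      dist u u' ≤
        hausdorffDist ((W : Set E) ∩ closedBall 0 1) ((W' : Set E) ∩ closedBall 0 1) := by
  have hne : ∀ V : Submodule ℝ E, ((V : Set E) ∩ closedBall 0 1).Nonempty :=
    fun V => ⟨0, V.zero_mem, mem_closedBall_self zero_le_one⟩
  have hcompact : IsCompact ((W' : Set E) ∩ closedBall 0 1) :=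
    (isCompact_closedBall 0 1).inter_left W'.closed_of_finiteDimensional
  obtain ⟨u', hu', hdist⟩ := hcompact.exists_infDist_eq_dist (hne W') u
  refine ⟨u', hu', hdist ▸ infDist_le_hausdorffDist_of_mem hu ?_⟩
  exact hausdorffEDist_ne_top_of_nonempty_of_bounded (hne W) (hne W')
    (isBounded_closedBall.subset inter_subset_right) (isBounded_closedBall.subset inter_subset_right)

lemma exists_mem_norm_sub_le_hausdorffDist_unitBall (W W' : Submodule ℝ E) {h : E}
    (hh : h ∈ W) :
    ∃ h' ∈ W', ‖h'‖ ≤ ‖h‖ ∧ ‖h - h'‖ ≤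
      ‖h‖ * hausdorffDist ((W : Set E) ∩ closedBall 0 1) ((W' : Set E) ∩ closedBall 0 1) := by
  rcases eq_or_ne h 0 with rfl | h0
  · exact ⟨0, W'.zero_mem, by simp, by simp⟩
  have hpos : 0 < ‖h‖ := norm_pos_iff.mpr h0
  have hu : ‖h‖⁻¹ • h ∈ (W : Set E) ∩ closedBall 0 1 :=
    ⟨W.smul_mem _ hh, by simp [norm_smul, hpos.ne']⟩
  obtain ⟨u', ⟨hu'W', hu'ball⟩, hdist⟩ := exists_mem_dist_le_hausdorffDist_unitBall W W' hu
  refine ⟨‖h‖ • u', W'.smul_mem _ hu'W', ?_, ?_⟩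
  · simpa [norm_smul] using mul_le_of_le_one_right hpos.le (mem_closedBall_zero_iff.mp hu'ball)
  · have hscale : h - ‖h‖ • u' = ‖h‖ • (‖h‖⁻¹ • h - u') := by
      rw [smul_sub, smul_inv_smul₀ hpos.ne']
    rw [hscale, norm_smul, norm_norm, ← dist_eq_norm]
    gcongr

end Approximation

section Deviation

variable {n : ℕ} {f : EuclideanSpace ℝ (Fin n) → ℝ} {x : EuclideanSpace ℝ (Fin n)}
  {W : Submodule ℝ (EuclideanSpace ℝ (Fin n))} {α : EuclideanSpace ℝ (Fin n) →L[ℝ] ℝ} {δ : ℝ}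

lemma devLin_nonneg : 0 ≤ devLin f x W α δ := by
  apply Real.sSup_nonneg
  rintro _ ⟨h, -, rfl⟩
  positivity

lemma devLin_le {C : ℝ} (hC : 0 ≤ C)
    (hbound : ∀ h ∈ W, 0 < ‖h‖ → ‖h‖ ≤ δ → |f (x + h) - f x - α h| ≤ C * ‖h‖) :
    devLin f x W α δ ≤ C := by
  apply Real.sSup_le _ hC
  rintro _ ⟨h, ⟨hW, hpos, hle⟩, rfl⟩
  exact (div_le_iff₀ hpos).mpr (hbound h hW hpos hle)

lemma bddAbove_devLin_image {L : NNReal} (hf : LipschitzWith L f) :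
    BddAbove ((fun h => |f (x + h) - f x - α h| / ‖h‖) ''
      {h : EuclideanSpace ℝ (Fin n) | h ∈ W ∧ 0 < ‖h‖ ∧ ‖h‖ ≤ δ}) := by
  refine ⟨(L : ℝ) + ‖α‖, ?_⟩
  rintro _ ⟨h, ⟨-, hpos, -⟩, rfl⟩
  rw [div_le_iff₀ hpos]
  simpa [add_mul] using abs_sub_sub_le_of_lipschitzWith hf x h 0 α 0

lemma abs_sub_sub_le_devLin_mul {L : NNReal} (hf : LipschitzWith L f) {h}
    (hW : h ∈ W) (hle : ‖h‖ ≤ δ) :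
    |f (x + h) - f x - α h| ≤ devLin f x W α δ * ‖h‖ := by
  rcases eq_or_ne h 0 with rfl | h0
  · simp
  have hpos : 0 < ‖h‖ := norm_pos_iff.mpr h0
  rw [← div_le_iff₀ hpos]
  exact le_csSup (bddAbove_devLin_image hf) ⟨h, ⟨hW, hpos, hle⟩, rfl⟩

end Deviation

theorem stmt_1_general {n : ℕ} (f : EuclideanSpace ℝ (Fin n) → ℝ) (L : NNReal)
    (hf : LipschitzWith L f) (x : EuclideanSpace ℝ (Fin n))
    (W W' : Submodule ℝ (EuclideanSpace ℝ (Fin n)))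
    (α α' : EuclideanSpace ℝ (Fin n) →L[ℝ] ℝ) (δ : ℝ) :
    devLin f x W α δ ≤ devLin f x W' α' δ + ‖α' - α‖ + ((L : ℝ) + ‖α'‖) * grDist W W' := by
  have hd : 0 ≤ grDist W W' := hausdorffDist_nonneg
  have hm' : 0 ≤ devLin f x W' α' δ := devLin_nonneg
  refine devLin_le (by positivity) fun h hW _ hle => ?_
  obtain ⟨h', hW', hnorm, hclose⟩ := exists_mem_norm_sub_le_hausdorffDist_unitBall W W' hW
  have hdev' := abs_sub_sub_le_devLin_mul (x := x) (α := α') hf hW' (hnorm.trans hle)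
  calc |f (x + h) - f x - α h|
      ≤ |f (x + h') - f x - α' h'| + ((L : ℝ) + ‖α'‖) * ‖h - h'‖ + ‖α' - α‖ * ‖h‖ :=
        abs_sub_sub_le_of_lipschitzWith hf x h h' α α'
    _ ≤ devLin f x W' α' δ * ‖h‖ + ((L : ℝ) + ‖α'‖) * (‖h‖ * grDist W W') + ‖α' - α‖ * ‖h‖ := by
        gcongr
        · exact hdev'.trans (by gcongr)
        · exact hclose
    _ = (devLin f x W' α' δ + ‖α' - α‖ + ((L : ℝ) + ‖α'‖) * grDist W W') * ‖h‖ := by ring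

/-- `m(f,x,W,α,δ) ≤ m(f,x,W',α',δ) + ‖α' − α‖ + (L + ‖α'‖)·d_gr(W,W')`. -/
theorem stmt_1 {n : ℕ} (f : EuclideanSpace ℝ (Fin n) → ℝ) (L : NNReal)
    (hf : LipschitzWith L f) (x : EuclideanSpace ℝ (Fin n))
    (W W' : Submodule ℝ (EuclideanSpace ℝ (Fin n)))
    (α α' : EuclideanSpace ℝ (Fin n) →L[ℝ] ℝ) (δ : ℝ) (hδ : 0 < δ) :
    devLin f x W α δ ≤ devLin f x W' α' δ + ‖α' - α‖ + ((L : ℝ) + ‖α'‖) * grDist W W' :=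
  stmt_1_general f L hf x W W' α α' δ
end

section
/- Let v be a k-vector in a finite-dimensional real vector space V. Then span(v) equals the set of all vectors of the form v ⌟ α with α ∈ ⋀^{k−1}(V), where v ⌟ α denotes the interior product, i.e., the unique (1)-vector satisfying ⟨v ⌟ α, β⟩ = ⟨v, α ∧ β⟩ for every 1-covector β. -/
/-!
Let `S = {v ⌟ α}`. If a covector `β` kills `S`, then `⟨φ, β ⌟ v⟩ = ⟨β ∧ φ, v⟩ = 0` for every
`m`-covector `φ`, so the contraction `β ⌟ v` vanishes by nondegeneracy of the determinant
pairing. Then the projection `a ↦ a - β a • t` onto `ker β` (with `β t = 1`) fixes `v`, so `v`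
is a `k`-vector of `ker β` and `span(v) ≤ ker β`; intersecting over all such `β` gives
`span(v) ≤ S`. Conversely, if `β` kills `span(v)`, each `⟨β ∧ φ, v⟩` is a sum of determinants
with a zero row, so `β` kills `S` and `S ≤ span(v)`.
-/

/-- `v` belongs to the `k`-th exterior power `⋀_k(W)` of the subspace `W`, under the canonical
identification of `⋀[ℝ]^k W` with a subspace of the exterior algebra of `V`. -/
def MemExtPowOf {V : Type*} [AddCommGroup V] [Module ℝ V] (k : ℕ) (W : Submodule ℝ V)
    (v : ExteriorAlgebra ℝ V) : Prop :=
  v ∈ Submodule.map (ExteriorAlgebra.map W.subtype).toLinearMap (⋀[ℝ]^k W)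

open CliffordAlgebra (contractLeft contractLeft_ι contractLeft_ι_mul contractLeft_algebraMap)

namespace ExteriorAlgebra

section CommRing

variable {R M N : Type*} [CommRing R] [AddCommGroup M] [Module R M] [AddCommGroup N] [Module R N]

-- `⋀_k(T)`; over `ℝ`, `MemExtPowOf k T v` is `v ∈ exteriorPowerIn k T`.
def exteriorPowerIn (k : ℕ) (T : Submodule R M) : Submodule R (ExteriorAlgebra R M) :=
  (⋀[R]^k T).map (map T.subtype).toLinearMap

theorem map_mem_exteriorPower (f : M →ₗ[R] N) {k : ℕ} {x : ExteriorAlgebra R M}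
    (hx : x ∈ ⋀[R]^k M) : map f x ∈ ⋀[R]^k N := by
  have : (⋀[R]^k M).map (map f).toLinearMap ≤ ⋀[R]^k N := by
    rw [exteriorPower, exteriorPower, Submodule.map_pow, ι_range_map_map]
    exact pow_le_pow_left' LinearMap.map_le_range k
  exact this ⟨x, hx, rfl⟩

theorem map_mem_exteriorPowerIn {f : M →ₗ[R] N} {T : Submodule R N} (hf : ∀ a, f a ∈ T)
    {k : ℕ} {x : ExteriorAlgebra R M} (hx : x ∈ ⋀[R]^k M) : map f x ∈ exteriorPowerIn k T := by
  refine ⟨map (f.codRestrict T hf) x, map_mem_exteriorPower _ hx, ?_⟩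
  rw [AlgHom.toLinearMap_apply, ← AlgHom.comp_apply, map_comp_map,
    LinearMap.subtype_comp_codRestrict]

theorem contractLeft_mem_exteriorPower (β : Module.Dual R M) {n : ℕ} {y : ExteriorAlgebra R M}
    (hy : y ∈ ⋀[R]^(n + 1) M) : contractLeft (Q := 0) β y ∈ ⋀[R]^n M := by
  induction n generalizing y with
  | zero =>
    rw [exteriorPower, zero_add, pow_one] at hy
    obtain ⟨a, rfl⟩ := hy
    rw [contractLeft_ι]
    exact Submodule.algebraMap_mem _
  | succ n ih =>
    rw [exteriorPower, pow_succ'] at hy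
    induction hy using Submodule.mul_induction_on' with
    | mem_mul_mem a ha z hz =>
      obtain ⟨a, rfl⟩ := ha
      rw [contractLeft_ι_mul]
      refine Submodule.sub_mem _ (Submodule.smul_mem _ _ hz) ?_
      rw [exteriorPower, pow_succ']
      exact Submodule.mul_mem_mul (LinearMap.mem_range_self _ a) (ih hz)
    | add y₁ _ y₂ _ h₁ h₂ => rw [map_add]; exact Submodule.add_mem _ h₁ h₂

theorem map_id_sub_smulRight (β : Module.Dual R M) (t : M) (x : ExteriorAlgebra R M) :
    map (LinearMap.id - β.smulRight t) x = x - ι R t * contractLeft (Q := 0) β x := by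
  induction x using CliffordAlgebra.left_induction with
  | algebraMap r => simp [contractLeft_algebraMap]
  | add x y hx hy => rw [map_add, hx, hy, map_add, mul_add]; abel
  | ι_mul x a hx =>
    have hanti : ι R a * ι R t = -(ι R t * ι R a) :=
      eq_neg_of_add_eq_zero_left (ι_add_mul_swap a t)
    rw [map_mul, map_apply_ι, hx, contractLeft_ι_mul]
    simp only [LinearMap.sub_apply, LinearMap.id_apply, LinearMap.smulRight_apply, map_sub,
      map_smul, sub_mul, mul_sub, smul_mul_assoc, mul_smul_comm, ← mul_assoc, hanti, ι_sq_zero]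
    simp only [neg_mul, zero_mul, smul_zero]
    abel

noncomputable def detDual {n : ℕ} (φ : Fin n → Module.Dual R M) : M [⋀^Fin n]→ₗ[R] R :=
  Matrix.detRowAlternating.compLinearMap (LinearMap.pi φ)

theorem detDual_apply {n : ℕ} (φ : Fin n → Module.Dual R M) (w : Fin n → M) :
    detDual φ w = (Matrix.of fun i j => φ i (w j)).det := by
  rw [detDual, AlternatingMap.compLinearMap_apply, ← Matrix.det_transpose]
  rfl

theorem detDual_curryLeft {n : ℕ} (φ : Fin (n + 1) → Module.Dual R M) (a : M) :
    (detDual φ).curryLeft a =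
      ∑ i : Fin (n + 1), ((-1) ^ (i : ℕ) * φ i a) • detDual (φ ∘ i.succAbove) := by
  ext w
  rw [AlternatingMap.curryLeft_apply_apply, detDual_apply, Matrix.det_succ_column_zero]
  change _ = AddMonoidHom.mk' (fun f : M [⋀^Fin n]→ₗ[R] R => f w) (fun _ _ => rfl) (∑ i, _)
  rw [map_sum]
  refine Finset.sum_congr rfl fun i _ => ?_
  rw [AddMonoidHom.mk'_apply, AlternatingMap.smul_apply, detDual_apply, smul_eq_mul]
  rfl

-- `⟨φ 0 ∧ ⋯ ∧ φ (n-1), ·⟩` on `n`-vectors, extended by zero to the other degrees.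
noncomputable def pairingMulti {n : ℕ} (φ : Fin n → Module.Dual R M) :
    ExteriorAlgebra R M →ₗ[R] R :=
  liftAlternating (Pi.single n (detDual φ))

theorem pairingMulti_ιMulti {n : ℕ} (φ : Fin n → Module.Dual R M) (w : Fin n → M) :
    pairingMulti φ (ιMulti R n w) = (Matrix.of fun i j => φ i (w j)).det := by
  rw [pairingMulti, liftAlternating_apply_ιMulti, Pi.single_eq_same, detDual_apply]

theorem pairingMulti_eq_pairingDual {n : ℕ} (φ : Fin n → Module.Dual R M) (y : ⋀[R]^n M) :
    pairingMulti φ y = exteriorPower.pairingDual R M n (exteriorPower.ιMulti R n φ) y := by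
  have : pairingMulti φ ∘ₗ (⋀[R]^n M).subtype =
      exteriorPower.pairingDual R M n (exteriorPower.ιMulti R n φ) := by
    refine exteriorPower.linearMap_ext (AlternatingMap.ext fun w => ?_)
    rw [LinearMap.compAlternatingMap_apply, LinearMap.comp_apply, Submodule.subtype_apply,
      exteriorPower.ιMulti_apply_coe, pairingMulti_ιMulti, LinearMap.compAlternatingMap_apply,
      exteriorPower.pairingDual_ιMulti_ιMulti, ← Matrix.det_transpose]
    rfl
  exact LinearMap.congr_fun this y

theorem eq_zero_of_forall_pairingMulti_eq_zero [Module.Free R M] [Module.Finite R M] {n : ℕ}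
    {y : ExteriorAlgebra R M} (hy : y ∈ ⋀[R]^n M)
    (h : ∀ φ : Fin n → Module.Dual R M, pairingMulti φ y = 0) : y = 0 := by
  let b := (Module.Free.chooseBasis R M).reindex (Fintype.equivFin _)
  suffices (⟨y, hy⟩ : ⋀[R]^n M) = 0 from congrArg Subtype.val this
  refine (b.exteriorPower n).repr.injective (Finsupp.ext fun s => ?_)
  rw [exteriorPower.basis_repr_apply, map_zero, Finsupp.coe_zero, Pi.zero_apply,
    exteriorPower.ιMultiDual, exteriorPower.ιMulti_family, ← pairingMulti_eq_pairingDual]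
  exact h _

theorem eq_pairingMulti_of_apply_ιMulti {n : ℕ} {φ : Fin n → Module.Dual R M}
    {L : ExteriorAlgebra R M →ₗ[R] R}
    (hL : ∀ w : Fin n → M, L (ιMulti R n w) = (Matrix.of fun i j => φ i (w j)).det)
    {y : ExteriorAlgebra R M} (hy : y ∈ ⋀[R]^n M) : L y = pairingMulti φ y := by
  rw [← ιMulti_span_fixedDegree] at hy
  refine LinearMap.eqOn_span' ?_ hy
  rintro _ ⟨w, rfl⟩
  rw [hL, pairingMulti_ιMulti]

theorem pairingMulti_eq_zero_of_mem_dualAnnihilator {n : ℕ} {φ : Fin n → Module.Dual R M}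
    {T : Submodule R M} {x : ExteriorAlgebra R M} (hx : x ∈ exteriorPowerIn n T) (i : Fin n)
    (hi : φ i ∈ T.dualAnnihilator) : pairingMulti φ x = 0 := by
  obtain ⟨y, hy, rfl⟩ := hx
  rw [← ιMulti_span_fixedDegree] at hy
  refine LinearMap.eqOn_span' (f := pairingMulti φ ∘ₗ (map T.subtype).toLinearMap) (g := 0)
    ?_ hy
  rintro _ ⟨w, rfl⟩
  rw [LinearMap.comp_apply, AlgHom.toLinearMap_apply, map_apply_ιMulti, pairingMulti_ιMulti,
    LinearMap.zero_apply]
  exact Matrix.det_eq_zero_of_row_eq_zero i fun j =>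
    (Submodule.mem_dualAnnihilator _).mp hi _ (w j).2

theorem pairingMulti_ι_mul_fin_zero (φ : Fin 0 → Module.Dual R M) (a : M)
    (z : ExteriorAlgebra R M) : pairingMulti φ (ι R a * z) = 0 := by
  have : (fun k : ℕ => (Pi.single (M := fun k => M [⋀^Fin k]→ₗ[R] R) 0 (detDual φ)
      k.succ).curryLeft a) = 0 := by
    funext k
    rw [Pi.single_eq_of_ne (Nat.succ_ne_zero k), AlternatingMap.curryLeft_zero]
    rfl
  rw [pairingMulti, liftAlternating_ι_mul, this, map_zero, LinearMap.zero_apply]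

theorem pairingMulti_ι_mul {n : ℕ} (φ : Fin (n + 1) → Module.Dual R M) (a : M)
    (z : ExteriorAlgebra R M) :
    pairingMulti φ (ι R a * z) =
      ∑ i : Fin (n + 1), (-1) ^ (i : ℕ) * φ i a * pairingMulti (φ ∘ i.succAbove) z := by
  have : (fun k : ℕ => (Pi.single (M := fun k => M [⋀^Fin k]→ₗ[R] R) (n + 1) (detDual φ)
      k.succ).curryLeft a) = Pi.single n ((detDual φ).curryLeft a) := by
    funext k
    by_cases hk : k = n
    · subst hk
      rw [Pi.single_eq_same, Pi.single_eq_same]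
    · rw [Pi.single_eq_of_ne (by omega), Pi.single_eq_of_ne hk, AlternatingMap.curryLeft_zero]
      rfl
  rw [pairingMulti, liftAlternating_ι_mul, this, detDual_curryLeft,
    ← LinearMap.single_apply (R := R), map_sum, map_sum, LinearMap.sum_apply]
  refine Finset.sum_congr rfl fun i _ => ?_
  rw [map_smul, map_smul, LinearMap.smul_apply, smul_eq_mul, LinearMap.single_apply, pairingMulti]

theorem pairingMulti_contractLeft (β : Module.Dual R M) {n : ℕ} (φ : Fin n → Module.Dual R M)
    (y : ExteriorAlgebra R M) :
    pairingMulti φ (contractLeft (Q := 0) β y) = pairingMulti (Fin.cons β φ) y := by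
  induction y using CliffordAlgebra.left_induction generalizing n with
  | algebraMap r =>
    rw [contractLeft_algebraMap, map_zero, pairingMulti,
      liftAlternating_algebraMap, Pi.single_eq_of_ne (Nat.succ_ne_zero n).symm]
    exact (smul_zero r).symm
  | add x y hx hy => rw [map_add, map_add, map_add, hx, hy]
  | ι_mul x a hx =>
    have hcons_zero :
        (Fin.cons β φ : Fin (n + 1) → Module.Dual R M) ∘ (0 : Fin (n + 1)).succAbove = φ := by
      ext i : 1
      simp
    rw [contractLeft_ι_mul, map_sub, map_smul, pairingMulti_ι_mul, Fin.sum_univ_succ, hcons_zero]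
    cases n with
    | zero =>
      simp [pairingMulti_ι_mul_fin_zero]
    | succ n =>
      have hcons_succ : ∀ i : Fin (n + 1),
          (Fin.cons β φ : Fin (n + 2) → Module.Dual R M) ∘ i.succ.succAbove =
            Fin.cons β (φ ∘ i.succAbove) := by
        intro i
        ext j : 1
        refine Fin.cases ?_ (fun j => ?_) j <;> simp
      simp only [pairingMulti_ι_mul, hcons_succ, ← hx]
      simp only [Fin.val_zero, pow_zero, one_mul, Fin.cons_zero, Fin.cons_succ, Fin.val_succ,
        pow_succ, mul_neg_one, neg_mul, Finset.sum_neg_distrib, smul_eq_mul]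
      ring

end CommRing

section Field

variable {K V : Type*} [Field K] [AddCommGroup V] [Module K V]

theorem mem_exteriorPowerIn_ker_of_contractLeft_eq_zero {β : Module.Dual K V} {k : ℕ}
    {x : ExteriorAlgebra K V} (hx : x ∈ ⋀[K]^k V) (hβx : contractLeft (Q := 0) β x = 0) :
    x ∈ exteriorPowerIn k (LinearMap.ker β) := by
  obtain ⟨t, ht⟩ : ∃ t, ∀ a, β (a - β a • t) = 0 := by
    by_cases hβ : β = 0
    · exact ⟨0, by simp [hβ]⟩
    · obtain ⟨t, ht⟩ : ∃ t, β t ≠ 0 := by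
        by_contra! h
        exact hβ (LinearMap.ext h)
      exact ⟨(β t)⁻¹ • t, fun a => by simp [inv_mul_cancel₀ ht]⟩
  have := map_mem_exteriorPowerIn (f := LinearMap.id - β.smulRight t) (T := LinearMap.ker β)
    ht hx
  rwa [map_id_sub_smulRight, hβx, mul_zero, sub_zero] at this

end Field

end ExteriorAlgebra

open ExteriorAlgebra

/-- Let `v` be a `k`-vector (`k = m+1`) on a finite-dimensional real vector
space `V`. Let `pair` be the duality pairing between `k`-covectors and `k`-vectors (given by
determinants on simple elements), `wedge` the wedge product of an `m`-covector with a
`1`-covector, and `intProd` the interior product, characterized by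
`⟨v ⌟ α, β⟩ = ⟨α ∧ β, v⟩` for every `1`-covector `β`. Then `span(v)` (the smallest subspace
`W` with `v ∈ ⋀_k(W)`) equals the set of all vectors `v ⌟ α` with `α ∈ ⋀^m(V)`. -/
theorem stmt_5 {V : Type*} [AddCommGroup V] [Module ℝ V] [FiniteDimensional ℝ V] (m : ℕ)
    (v : ExteriorAlgebra ℝ V) (hvk : v ∈ ⋀[ℝ]^(m+1) V)
    (pair : ExteriorAlgebra ℝ (Module.Dual ℝ V) →ₗ[ℝ] ExteriorAlgebra ℝ V →ₗ[ℝ] ℝ)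
    (hpair : ∀ (φ : Fin (m+1) → Module.Dual ℝ V) (w : Fin (m+1) → V),
      pair (ExteriorAlgebra.ιMulti ℝ (m+1) φ) (ExteriorAlgebra.ιMulti ℝ (m+1) w)
        = Matrix.det (Matrix.of fun i j => φ i (w j)))
    (wedge : ExteriorAlgebra ℝ (Module.Dual ℝ V) →ₗ[ℝ] Module.Dual ℝ V →ₗ[ℝ]
      ExteriorAlgebra ℝ (Module.Dual ℝ V))
    (hwedge : ∀ (φ : Fin m → Module.Dual ℝ V) (β : Module.Dual ℝ V),
      wedge (ExteriorAlgebra.ιMulti ℝ m φ) β = ExteriorAlgebra.ιMulti ℝ (m+1) (Fin.cons β φ))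
    (intProd : ExteriorAlgebra ℝ V → ExteriorAlgebra ℝ (Module.Dual ℝ V) → V)
    (hint : ∀ w α (β : Module.Dual ℝ V), β (intProd w α) = pair (wedge α β) w)
    (W : Submodule ℝ V) (hW : MemExtPowOf (m+1) W v)
    (hmin : ∀ W' : Submodule ℝ V, MemExtPowOf (m+1) W' v → W ≤ W') :
    (W : Set V) = {u : V | ∃ α ∈ ⋀[ℝ]^m (Module.Dual ℝ V), intProd v α = u} := by
  -- `intProd v` is linear: it is `α ↦ (β ↦ ⟨α ∧ β, v⟩)` read back through `V ≃ V**`.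
  set L : ExteriorAlgebra ℝ (Module.Dual ℝ V) →ₗ[ℝ] V :=
    (Module.evalEquiv ℝ V).symm.toLinearMap ∘ₗ wedge.compr₂ (pair.flip v)
  have hL : ∀ α, intProd v α = L α := fun α =>
    (Module.evalEquiv ℝ V).eq_symm_apply.mpr (LinearMap.ext fun β => hint v α β)
  have hcons : ∀ φ β, β (L (ιMulti ℝ m φ)) = pairingMulti (Fin.cons β φ) v := fun φ β => by
    rw [← hL, hint, hwedge, eq_pairingMulti_of_apply_ιMulti (hpair _) hvk]
  set S := (⋀[ℝ]^m (Module.Dual ℝ V)).map L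
  suffices W = S by
    ext u
    simp [this, S, hL]
  refine le_antisymm (fun u hu => ?_) ?_
  · rw [← Subspace.forall_mem_dualAnnihilator_apply_eq_zero_iff]
    intro β hβ
    have hβv : contractLeft (Q := 0) β v = 0 :=
      eq_zero_of_forall_pairingMulti_eq_zero (contractLeft_mem_exteriorPower β hvk) fun φ => by
        rw [pairingMulti_contractLeft, ← hcons]
        exact (Submodule.mem_dualAnnihilator β).mp hβ _
          (Submodule.mem_map_of_mem (ιMulti_range ℝ m ⟨φ, rfl⟩))
    exact hmin _ (mem_exteriorPowerIn_ker_of_contractLeft_eq_zero hvk hβv) hu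
  · rw [Submodule.map_le_iff_le_comap, ← ιMulti_span_fixedDegree, Submodule.span_le]
    rintro _ ⟨φ, rfl⟩
    rw [SetLike.mem_coe, Submodule.mem_comap,
      ← Subspace.forall_mem_dualAnnihilator_apply_eq_zero_iff]
    intro β hβ
    rw [hcons]
    exact pairingMulti_eq_zero_of_mem_dualAnnihilator hW 0 hβ
end

section
/- Let X be a compact metric space, ℱ a convex, weak*-compact family of Borel probability measures on X, and μ a finite positive Borel measure on X which is singular with respect to every λ ∈ ℱ. Then there exists a Borel set E ⊆ X such that μ(X \ E) = 0 and λ(E) = 0 for every λ ∈ ℱ. -/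
/-!
Call `∫ f dλ + ∫ (1 - f) dμ` the separation defect of a continuous `f : X → [0, 1]`. Singularity
of `μ` and `λ`, outer regularity and Urysohn's lemma make it arbitrarily small for each single
`λ`. Being affine in `f` and in `λ`, and continuous in `λ` for the weak* topology, it can be made
small uniformly on the compact convex family `F`: finitely many `f`s suffice by compactness, and
the minimax theorem on the simplex of their convex combinations produces a single `g`. By
Markov's inequality the set `{g ≥ 1/2}` is then `λ`-small for all `λ ∈ F` while its complement is
`μ`-small, and `E` is the lim inf of such sets with summable errors (Borel–Cantelli).
-/

open Set Filter Matrix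
open scoped ENNReal NNReal BoundedContinuousFunction

theorem exists_mem_stdSimplex_forall_dotProduct_lt {ι : Type*} [Fintype ι] {K : Set (ι → ℝ)}
    (hne : K.Nonempty) (hconv : Convex ℝ K) (hcomp : IsCompact K) {c : ℝ}
    (hK : ∀ y ∈ K, ∃ i, y i < c) : ∃ w ∈ stdSimplex ℝ ι, ∀ y ∈ K, w ⬝ᵥ y < c := by
  classical
  obtain ⟨i₀, -⟩ := hK _ hne.some_mem
  have hcont : Continuous fun p : (ι → ℝ) × (ι → ℝ) => p.1 ⬝ᵥ p.2 :=
    continuous_fst.dotProduct continuous_snd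
  obtain ⟨w, hw, b, hb, hsaddle⟩ := Sion.exists_isSaddlePointOn (f := fun w y => w ⬝ᵥ y)
    ⟨_, single_mem_stdSimplex ℝ i₀⟩ (convex_stdSimplex ℝ ι) (isCompact_stdSimplex ℝ ι)
    (fun y _ => (hcont.comp (continuous_id.prodMk continuous_const)).lowerSemicontinuous
      |>.lowerSemicontinuousOn _)
    (fun y _ => (((dotProductBilin ℝ ℝ).flip y).convexOn (convex_stdSimplex ℝ ι)).quasiconvexOn)
    hconv hne hcomp
    (fun w _ => (hcont.comp (continuous_const.prodMk continuous_id)).upperSemicontinuous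
      |>.upperSemicontinuousOn _)
    (fun w _ => ((dotProductBilin ℝ ℝ w).concaveOn hconv).quasiconcaveOn)
  obtain ⟨i, hi⟩ := hK b hb
  refine ⟨w, hw, fun y hy => ?_⟩
  calc w ⬝ᵥ y ≤ Pi.single i 1 ⬝ᵥ b := hsaddle _ (single_mem_stdSimplex ℝ i) y hy
    _ = b i := single_one_dotProduct i b
    _ < c := hi

namespace MeasureTheory

theorem measure_setOf_half_le_le {α : Type*} [MeasurableSpace α] {ν : Measure α} {h : α → ℝ}
    (hint : Integrable h ν) (h_nonneg : 0 ≤ᵐ[ν] h) {ε : ℝ≥0} (hε : 2 * ∫ x, h x ∂ν ≤ ε) :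
    ν {x | 1 / 2 ≤ h x} ≤ ε :=
  calc ν {x | 1 / 2 ≤ h x} ≤ ENNReal.ofReal (∫ x, 2 * h x ∂ν) :=
        (hint.const_mul 2).measure_le_integral (h_nonneg.mono fun x hx => mul_nonneg zero_le_two hx)
          fun x hx => by simp only [mem_ofPred_eq] at hx; linarith
    _ ≤ ε := by
        rw [integral_const_mul, ← ENNReal.ofReal_coe_nnreal]
        exact ENNReal.ofReal_le_ofReal hε

variable {X : Type*} [TopologicalSpace X] [MeasurableSpace X]

noncomputable def separationDefect (μ ν : Measure X) (f : X →ᵇ ℝ) : ℝ :=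
  ∫ x, f x ∂ν + ∫ x, (1 - f x) ∂μ

section

variable [OpensMeasurableSpace X]

theorem separationDefect_sum_smul {ι : Type*} [Fintype ι] (μ ν : Measure X) [IsFiniteMeasure μ]
    [IsFiniteMeasure ν] {w : ι → ℝ} (hw : w ∈ stdSimplex ℝ ι) (f : ι → X →ᵇ ℝ) :
    separationDefect μ ν (∑ i, w i • f i) = w ⬝ᵥ fun i => separationDefect μ ν (f i) := by
  have hone : ∀ x, 1 - ∑ i, w i * f i x = ∑ i, w i * (1 - f i x) := fun x => by
    simp only [mul_sub, Finset.sum_sub_distrib, mul_one, hw.2]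
  simp only [separationDefect, dotProduct, mul_add, Finset.sum_add_distrib,
    BoundedContinuousFunction.coe_sum, BoundedContinuousFunction.coe_smul, Finset.sum_apply,
    smul_eq_mul, hone]
  have hint : ∀ i, Integrable (fun x => w i * (1 - f i x)) μ := fun i =>
    ((integrable_const 1).sub ((f i).integrable μ)).const_mul _
  rw [integral_finsetSum _ fun i _ => ((f i).integrable ν).const_mul _,
    integral_finsetSum _ fun i _ => hint i]
  simp only [integral_const_mul]

theorem separationDefect_smul_add_smul (μ ν₁ ν₂ : Measure X) [IsFiniteMeasure ν₁]
    [IsFiniteMeasure ν₂] (f : X →ᵇ ℝ) {a b : ℝ≥0} (hab : a + b = 1) :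
    separationDefect μ (a • ν₁ + b • ν₂) f =
      a * separationDefect μ ν₁ f + b * separationDefect μ ν₂ f := by
  have hab' : (a : ℝ) + b = 1 := by exact_mod_cast hab
  simp only [separationDefect, integral_add_measure ((f.integrable _).smul_measure_nnreal)
    ((f.integrable _).smul_measure_nnreal), integral_smul_nnreal_measure, NNReal.smul_def,
    smul_eq_mul]
  linear_combination (∫ x, (1 - f x) ∂μ) * hab'.symm

theorem continuous_separationDefect (μ : Measure X) (f : X →ᵇ ℝ) :
    Continuous fun ν : ProbabilityMeasure X => separationDefect μ ν f :=
  (ProbabilityMeasure.continuous_integral_boundedContinuousFunction f).add continuous_const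

theorem convex_image_separationDefect {F : Set (ProbabilityMeasure X)}
    (hFconvex : ∀ lam₁ ∈ F, ∀ lam₂ ∈ F, ∀ t : NNReal, t ≤ 1 →
      ∃ lam ∈ F, (lam : Measure X) = t • (lam₁ : Measure X) + (1 - t) • (lam₂ : Measure X))
    (μ : Measure X) {ι : Type*} (f : ι → X →ᵇ ℝ) :
    Convex ℝ ((fun ν : ProbabilityMeasure X => fun i => separationDefect μ ν (f i)) '' F) := by
  rintro _ ⟨lam₁, h₁, rfl⟩ _ ⟨lam₂, h₂, rfl⟩ a b ha hb hab
  have hab' : a.toNNReal + b.toNNReal = 1 := by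
    rw [← Real.toNNReal_add ha hb, hab, Real.toNNReal_one]
  have hb' : 1 - a.toNNReal = b.toNNReal := by rw [← hab', add_tsub_cancel_left]
  obtain ⟨lam, hlam, hlam_eq⟩ := hFconvex lam₁ h₁ lam₂ h₂ a.toNNReal (hab' ▸ le_self_add)
  refine ⟨lam, hlam, funext fun i => ?_⟩
  change separationDefect μ lam (f i) =
    a * separationDefect μ lam₁ (f i) + b * separationDefect μ lam₂ (f i)
  rw [hlam_eq, hb', separationDefect_smul_add_smul _ _ _ _ hab', Real.coe_toNNReal _ ha,
    Real.coe_toNNReal _ hb]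

end

section

variable [TopologicalSpace.PseudoMetrizableSpace X] [BorelSpace X]

theorem Measure.MutuallySingular.exists_separationDefect_lt {μ ν : Measure X} [IsFiniteMeasure μ]
    [IsFiniteMeasure ν] (h : μ ⟂ₘ ν) {δ : ℝ} (hδ : 0 < δ) :
    ∃ f : X →ᵇ ℝ, (∀ x, f x ∈ Icc 0 1) ∧ separationDefect μ ν f < δ := by
  obtain ⟨s, -, hμs, hνs⟩ := h
  have hδ₂ : (0 : ℝ≥0∞) < ENNReal.ofReal (δ / 2) := ENNReal.ofReal_pos.2 (by linarith)
  obtain ⟨V, hsV, hV, hμV⟩ := s.exists_isOpen_lt_of_lt _ (hμs ▸ hδ₂)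
  obtain ⟨U, hVU, hU, hνU⟩ := Vᶜ.exists_isOpen_lt_of_lt _
    ((measure_mono_null (compl_subset_compl.2 hsV) hνs) ▸ hδ₂)
  obtain ⟨f, hf0, hf1, hf01⟩ := exists_bounded_zero_one_of_closed hU.isClosed_compl
    hV.isClosed_compl (disjoint_compl_left_iff_subset.2 hVU)
  refine ⟨f, hf01, ?_⟩
  have hν : ENNReal.ofReal (∫ x, f x ∂ν) < ENNReal.ofReal (δ / 2) :=
    (integral_le_measure (fun x _ => (hf01 x).2) fun x hx => (hf0 (by simpa using hx)).le).trans_lt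
      hνU
  have hμ : ENNReal.ofReal (∫ x, (1 - f x) ∂μ) < ENNReal.ofReal (δ / 2) :=
    (integral_le_measure (fun x _ => by linarith [(hf01 x).1])
      fun x hx => by simp [hf1 hx]).trans_lt hμV
  rw [ENNReal.ofReal_lt_ofReal_iff (by linarith)] at hν hμ
  rw [separationDefect]
  linarith

theorem exists_forall_separationDefect_lt {F : Set (ProbabilityMeasure X)} (hFcompact : IsCompact F)
    (hFconvex : ∀ lam₁ ∈ F, ∀ lam₂ ∈ F, ∀ t : NNReal, t ≤ 1 →
      ∃ lam ∈ F, (lam : Measure X) = t • (lam₁ : Measure X) + (1 - t) • (lam₂ : Measure X))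
    {μ : Measure X} [IsFiniteMeasure μ] (hsing : ∀ lam ∈ F, μ ⟂ₘ (lam : Measure X))
    (hne : F.Nonempty) {δ : ℝ} (hδ : 0 < δ) :
    ∃ g : X →ᵇ ℝ, (∀ x, g x ∈ Icc 0 1) ∧ ∀ lam ∈ F, separationDefect μ lam g < δ := by
  choose f hf01 hfδ using fun lam : F => (hsing lam lam.2).exists_separationDefect_lt hδ
  obtain ⟨t, ht⟩ := hFcompact.elim_finite_subcover
    (fun i => {lam | separationDefect μ lam (f i) < δ})
    (fun i => isOpen_lt (continuous_separationDefect μ (f i)) continuous_const)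
    (fun lam hlam => mem_iUnion.2 ⟨⟨lam, hlam⟩, hfδ ⟨lam, hlam⟩⟩)
  let Φ : ProbabilityMeasure X → (t → ℝ) := fun lam j => separationDefect μ lam (f j)
  obtain ⟨w, hw, hwδ⟩ := exists_mem_stdSimplex_forall_dotProduct_lt (hne.image Φ)
    (convex_image_separationDefect hFconvex μ _)
    (hFcompact.image (continuous_pi fun j => continuous_separationDefect μ (f j))) (c := δ)
    (by
      rintro _ ⟨lam, hlam, rfl⟩
      obtain ⟨i, hi, hlam⟩ := mem_iUnion₂.1 (ht hlam)
      exact ⟨⟨i, hi⟩, hlam⟩)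
  refine ⟨∑ j, w j • f j, fun x => ?_, fun lam hlam => ?_⟩
  · simpa using (convex_Icc (0 : ℝ) 1).sum_mem (fun j _ => hw.1 j) hw.2 fun j _ => hf01 j x
  · rw [separationDefect_sum_smul _ _ hw]
    exact hwδ _ ⟨lam, hlam, rfl⟩

theorem exists_measurableSet_forall_measure_le {F : Set (ProbabilityMeasure X)}
    (hFcompact : IsCompact F)
    (hFconvex : ∀ lam₁ ∈ F, ∀ lam₂ ∈ F, ∀ t : NNReal, t ≤ 1 →
      ∃ lam ∈ F, (lam : Measure X) = t • (lam₁ : Measure X) + (1 - t) • (lam₂ : Measure X))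
    {μ : Measure X} [IsFiniteMeasure μ] (hsing : ∀ lam ∈ F, μ ⟂ₘ (lam : Measure X))
    {ε : ℝ≥0} (hε : 0 < ε) :
    ∃ A : Set X, MeasurableSet A ∧ μ Aᶜ ≤ ε ∧ ∀ lam ∈ F, (lam : Measure X) A ≤ ε := by
  rcases F.eq_empty_or_nonempty with rfl | hne
  · exact ⟨univ, .univ, by simp, by simp⟩
  obtain ⟨g, hg01, hgε⟩ := exists_forall_separationDefect_lt hFcompact hFconvex hsing hne
    (half_pos (NNReal.coe_pos.2 hε))
  have hg_nonneg : ∀ x, 0 ≤ g x := fun x => (hg01 x).1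
  have hg_le_one : ∀ x, 0 ≤ 1 - g x := fun x => sub_nonneg.2 (hg01 x).2
  have hsplit (lam) (hlam : lam ∈ F) :
      2 * ∫ x, g x ∂(lam : Measure X) ≤ ε ∧ 2 * ∫ x, (1 - g x) ∂μ ≤ ε := by
    have hdefect := hgε lam hlam
    rw [separationDefect] at hdefect
    have h₁ := integral_nonneg (μ := (lam : Measure X)) (f := fun x => g x) hg_nonneg
    have h₂ := integral_nonneg (μ := μ) (f := fun x => 1 - g x) hg_le_one
    constructor <;> linarith
  refine ⟨{x | 1 / 2 ≤ g x}, (isClosed_le continuous_const g.continuous).measurableSet, ?_,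
    fun lam hlam => measure_setOf_half_le_le (g.integrable _) (ae_of_all _ hg_nonneg)
      (hsplit lam hlam).1⟩
  obtain ⟨lam, hlam⟩ := hne
  calc μ {x | 1 / 2 ≤ g x}ᶜ ≤ μ {x | 1 / 2 ≤ 1 - g x} := measure_mono fun x hx => by
        simp only [mem_compl_iff, mem_ofPred_eq, not_le] at hx ⊢; linarith
    _ ≤ ε := measure_setOf_half_le_le ((integrable_const 1).sub (g.integrable μ))
        (ae_of_all _ hg_le_one) (hsplit lam hlam).2

end

end MeasureTheory

open MeasureTheory

theorem stmt_8_general {X : Type*} [MetricSpace X]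
    [MeasurableSpace X] [BorelSpace X]
    (F : Set (ProbabilityMeasure X)) (hFcompact : IsCompact F)
    (hFconvex : ∀ lam₁ ∈ F, ∀ lam₂ ∈ F, ∀ t : NNReal, t ≤ 1 →
      ∃ lam ∈ F, (lam : Measure X) = t • (lam₁ : Measure X) + (1 - t) • (lam₂ : Measure X))
    (μ : Measure X) [IsFiniteMeasure μ]
    (hsing : ∀ lam ∈ F, μ ⟂ₘ (lam : Measure X)) :
    ∃ E : Set X, MeasurableSet E ∧ μ Eᶜ = 0 ∧ ∀ lam ∈ F, (lam : Measure X) E = 0 := by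
  choose A hA hμA hFA using fun n : ℕ => exists_measurableSet_forall_measure_le hFcompact
    hFconvex hsing (pow_pos (by norm_num : (0 : ℝ≥0) < 2⁻¹) n)
  have hsum : ∑' n, ((2⁻¹ ^ n : ℝ≥0) : ℝ≥0∞) ≠ ∞ :=
    ENNReal.tsum_coe_ne_top_iff_summable.2 (NNReal.summable_geometric (by norm_num))
  refine ⟨liminf A atTop, MeasurableSet.measurableSet_liminf hA, ?_, fun lam hlam => ?_⟩
  · rw [liminf_compl]
    exact measure_limsup_atTop_eq_zero (ne_top_of_le_ne_top hsum (ENNReal.tsum_le_tsum hμA))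
  · exact measure_mono_null liminf_le_limsup (measure_limsup_atTop_eq_zero
      (ne_top_of_le_ne_top hsum (ENNReal.tsum_le_tsum fun n => hFA n lam hlam)))

/-- **Rainwater's lemma.** Let `X` be a compact metric space, `F` a convex and
weak*-compact family of Borel probability measures on `X`, and `μ` a finite Borel measure on
`X` singular with respect to every member of `F`. Then `μ` is supported on a Borel set which
is null for every member of `F`. -/
theorem stmt_8 {X : Type*} [MetricSpace X] [CompactSpace X]
    [MeasurableSpace X] [BorelSpace X]
    (F : Set (ProbabilityMeasure X)) (hFcompact : IsCompact F)
    (hFconvex : ∀ lam₁ ∈ F, ∀ lam₂ ∈ F, ∀ t : NNReal, t ≤ 1 →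
      ∃ lam ∈ F, (lam : Measure X) = t • (lam₁ : Measure X) + (1 - t) • (lam₂ : Measure X))
    (μ : Measure X) [IsFiniteMeasure μ]
    (hsing : ∀ lam ∈ F, μ ⟂ₘ (lam : Measure X)) :
    ∃ E : Set X, MeasurableSet E ∧ μ Eᶜ = 0 ∧ ∀ lam ∈ F, (lam : Measure X) E = 0 :=
  stmt_8_general F hFcompact hFconvex μ hsing
end

section
/- Let e be a unit vector in ℝⁿ and α ∈ (0, π/2). Let γ : J → ℝⁿ be Lipschitz on a compact interval J with γ'(s) ∈ C(e,α) for a.e. s ∈ J, where C(e,α) := { v : v·e ≥ cos(α)·|v| }. Then for every Borel set E ⊆ J, the 1-dimensional Hausdorff measure of γ(E) satisfies ℋ¹(γ(E)) ≤ (1/cos α) · ∫_E |γ'(s)| ds, and in particular for every Borel set F ⊆ ℝⁿ one has cos(α)·ℋ¹(γ(J) ∩ F) ≤ ∫_{γ⁻¹(F)} γ'(s)·e ds. -/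
/-!
Put `c = cos α` and `g s = ⟪γ s, e⟫`. For a vector `w` with `‖w‖ ≤ 1`, the function
`s ↦ ⟪γ s, e - c • w⟫` is Lipschitz with a.e. nonnegative derivative, hence nondecreasing; taking
`w` in the direction of `γ t - γ s` gives `c * ‖γ t - γ s‖ ≤ g t - g s` for `s ≤ t`. So `γ` factors
as `h ∘ g` with `h` `c⁻¹`-Lipschitz, and `ℋ¹(γ(E)) ≤ c⁻¹ |g(E)| ≤ c⁻¹ ∫_E g' ≤ c⁻¹ ∫_E ‖γ'‖`.
-/

open Set MeasureTheory Filter Topology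
open scoped RealInnerProductSpace NNReal ENNReal

theorem ae_restrict_Icc_mem_nhds (a b : ℝ) :
    ∀ᵐ s ∂volume.restrict (Icc a b), Icc a b ∈ 𝓝 s := by
  rw [← Measure.restrict_congr_set Ioo_ae_eq_Icc]
  filter_upwards [ae_restrict_mem measurableSet_Ioo] with s hs using Icc_mem_nhds hs.1 hs.2

theorem ae_restrict_Icc_hasDerivAt_of_hasDerivWithinAt {F : Type*} [NormedAddCommGroup F]
    [NormedSpace ℝ F] {f f' : ℝ → F} {a b : ℝ}
    (h : ∀ᵐ s ∂volume.restrict (Icc a b), HasDerivWithinAt f (f' s) (Icc a b) s) :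
    ∀ᵐ s ∂volume.restrict (Icc a b), HasDerivAt f (f' s) s := by
  filter_upwards [h, ae_restrict_Icc_mem_nhds a b] with s hs hI using hs.hasDerivAt hI

theorem LipschitzOnWith.integrableOn_Icc_of_ae_hasDerivWithinAt {F : Type*}
    [NormedAddCommGroup F] [NormedSpace ℝ F] [CompleteSpace F] {f f' : ℝ → F} {a b : ℝ} {K : ℝ≥0}
    (hf : LipschitzOnWith K f (Icc a b))
    (h : ∀ᵐ s ∂volume.restrict (Icc a b), HasDerivWithinAt f (f' s) (Icc a b) s) :
    IntegrableOn f' (Icc a b) := by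
  have hd := ae_restrict_Icc_hasDerivAt_of_hasDerivWithinAt h
  have hmeas : AEStronglyMeasurable f' (volume.restrict (Icc a b)) :=
    (aestronglyMeasurable_deriv f _).congr (by filter_upwards [hd] with s hs using hs.deriv)
  refine Integrable.mono' (integrableOn_const (C := (K : ℝ)) measure_Icc_lt_top.ne) hmeas ?_
  filter_upwards [hd, ae_restrict_Icc_mem_nhds a b] with s hs hI
  exact hs.le_of_lipschitzOn hI hf

theorem LipschitzOnWith.monotoneOn_of_ae_hasDerivWithinAt_nonneg {f f' : ℝ → ℝ} {a b : ℝ}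
    {K : ℝ≥0} (hf : LipschitzOnWith K f (Icc a b))
    (h : ∀ᵐ s ∂volume.restrict (Icc a b), HasDerivWithinAt f (f' s) (Icc a b) s ∧ 0 ≤ f' s) :
    MonotoneOn f (Icc a b) := by
  intro s hs t ht hst
  have hsub : Icc s t ⊆ Icc a b := Icc_subset_Icc hs.1 ht.2
  have hac : AbsolutelyContinuousOnInterval f s t :=
    (hf.mono (by rwa [uIcc_of_le hst])).absolutelyContinuousOnInterval
  have hderiv : 0 ≤ᵐ[volume.restrict (Icc s t)] deriv f := by
    filter_upwards [ae_restrict_of_ae_restrict_of_subset hsub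
      (ae_restrict_Icc_hasDerivAt_of_hasDerivWithinAt (h.mono fun _ => And.left)),
      ae_restrict_of_ae_restrict_of_subset hsub h] with u hu hu'
    exact hu.deriv ▸ hu'.2
  have := intervalIntegral.integral_nonneg_of_ae_restrict hst hderiv
  rwa [hac.integral_deriv_eq_sub, sub_nonneg] at this

theorem LipschitzOnWith.volume_image_le_lintegral_enorm {g g' : ℝ → ℝ} {s : Set ℝ} {K : ℝ≥0}
    (hg : LipschitzOnWith K g s) (hs : MeasurableSet s)
    (h : ∀ᵐ x ∂volume.restrict s, HasDerivWithinAt g (g' x) s x) :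
    volume (g '' s) ≤ ∫⁻ x in s, ‖g' x‖ₑ := by
  obtain ⟨t, ht, htm, hderiv⟩ := h.exists_measurable_mem
  have hnull : volume (g '' (s \ t)) = 0 := by
    have hst : volume (s \ t) = 0 := by
      rwa [mem_ae_iff, Measure.restrict_apply' hs, ← sdiff_eq_compl_inter] at ht
    have := (hg.mono (sdiff_subset (t := t))).hausdorffMeasure_image_le zero_le_one
    rw [hausdorffMeasure_real, hst, mul_zero] at this
    exact le_antisymm this zero_le
  calc volume (g '' s) ≤ volume (g '' (s ∩ t)) + volume (g '' (s \ t)) := by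
        refine (measure_mono ?_).trans (measure_union_le _ _)
        rw [← image_union, inter_union_sdiff]
    _ = volume (g '' (s ∩ t)) := by rw [hnull, add_zero]
    _ ≤ ∫⁻ x in s ∩ t, ENNReal.ofReal |((1 : ℝ →L[ℝ] ℝ).smulRight (g' x)).det| :=
        addHaar_image_le_lintegral_abs_det_fderiv volume (hs.inter htm)
          fun x hx => ((hderiv x hx.2).mono inter_subset_left).hasFDerivWithinAt
    _ ≤ ∫⁻ x in s, ‖g' x‖ₑ := by
        simp only [ContinuousLinearMap.det_smulRight, one_apply_eq_self, one_mul,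
          ← Real.enorm_eq_ofReal_abs]
        exact lintegral_mono_set inter_subset_left

theorem hausdorffMeasure_image_le_of_dist_le {α X Y : Type*} [MetricSpace X] [MetricSpace Y]
    [MeasurableSpace X] [BorelSpace X] [MeasurableSpace Y] [BorelSpace Y] {f : α → X}
    {g : α → Y} {s : Set α} {K : ℝ≥0}
    (h : ∀ x ∈ s, ∀ y ∈ s, dist (f x) (f y) ≤ K * dist (g x) (g y)) {d : ℝ} (hd : 0 ≤ d) :
    μH[d] (f '' s) ≤ (K : ℝ≥0∞) ^ d * μH[d] (g '' s) := by
  rcases s.eq_empty_or_nonempty with rfl | ⟨x₀, -⟩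
  · simp
  have : Nonempty α := ⟨x₀⟩
  have hinv : ∀ x ∈ s, Function.invFunOn g s (g x) ∈ s ∧ g (Function.invFunOn g s (g x)) = g x :=
    fun x hx => ⟨Function.invFunOn_mem ⟨x, hx, rfl⟩, Function.invFunOn_eq ⟨x, hx, rfl⟩⟩
  have hfactor : ∀ x ∈ s, f (Function.invFunOn g s (g x)) = f x := fun x hx => by
    have := h _ (hinv x hx).1 x hx
    rwa [(hinv x hx).2, dist_self, mul_zero, dist_le_zero] at this
  have hlip : LipschitzOnWith K (f ∘ Function.invFunOn g s) (g '' s) := by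
    refine LipschitzOnWith.of_dist_le_mul ?_
    rintro _ ⟨x, hx, rfl⟩ _ ⟨y, hy, rfl⟩
    simpa only [Function.comp_apply, hfactor x hx, hfactor y hy] using h x hx y hy
  have himage : (f ∘ Function.invFunOn g s) '' (g '' s) = f '' s := by
    rw [← image_comp]
    exact image_congr fun x hx => hfactor x hx
  simpa only [himage] using hlip.hausdorffMeasure_image_le hd

theorem ContinuousOn.measurableSet_inter_preimage {α β : Type*} [TopologicalSpace α]
    [MeasurableSpace α] [OpensMeasurableSpace α] [TopologicalSpace β] [MeasurableSpace β]
    [BorelSpace β] {f : α → β} {s : Set α} {t : Set β} (hf : ContinuousOn f s)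
    (hs : MeasurableSet s) (ht : MeasurableSet t) : MeasurableSet (s ∩ f ⁻¹' t) := by
  rw [← Subtype.image_preimage_coe]
  exact hs.subtype_image (hf.domRestrict.measurable ht)

theorem inner_sub_smul_nonneg_of_mul_norm_le_inner {E : Type*} [NormedAddCommGroup E]
    [InnerProductSpace ℝ E] {v e w : E} {c : ℝ} (hc : 0 ≤ c) (hv : c * ‖v‖ ≤ ⟪v, e⟫)
    (hw : ‖w‖ ≤ 1) : 0 ≤ ⟪v, e - c • w⟫ := by
  have : ⟪v, w⟫ ≤ ‖v‖ := (real_inner_le_norm v w).trans (mul_le_of_le_one_right (norm_nonneg v) hw)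
  rw [inner_sub_right, real_inner_smul_right]
  nlinarith

theorem LipschitzOnWith.inner_const {α E : Type*} [PseudoEMetricSpace α] [NormedAddCommGroup E]
    [InnerProductSpace ℝ E] {f : α → E} {s : Set α} {K : ℝ≥0} (hf : LipschitzOnWith K f s)
    (v : E) : LipschitzOnWith (‖v‖₊ * K) (fun x => ⟪f x, v⟫) s := by
  have : ‖innerSL ℝ v‖₊ = ‖v‖₊ := NNReal.eq (innerSL_apply_norm ℝ v)
  simpa [Function.comp_def, real_inner_comm, this] using
    (innerSL ℝ v).lipschitz.comp_lipschitzOnWith hf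

section ConePath

variable {E : Type*} [NormedAddCommGroup E] [InnerProductSpace ℝ E] {γ γ' : ℝ → E} {e : E}
  {c a b : ℝ} {K : ℝ≥0}

theorem mul_norm_sub_le_inner_sub_of_ae_deriv_mem_cone (hc : 0 ≤ c)
    (hγ : LipschitzOnWith K γ (Icc a b))
    (hderiv : ∀ᵐ s ∂volume.restrict (Icc a b),
      HasDerivWithinAt γ (γ' s) (Icc a b) s ∧ c * ‖γ' s‖ ≤ ⟪γ' s, e⟫)
    {s t : ℝ} (hs : s ∈ Icc a b) (ht : t ∈ Icc a b) (hst : s ≤ t) :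
    c * ‖γ t - γ s‖ ≤ ⟪γ t - γ s, e⟫ := by
  set u := γ t - γ s
  set w := ‖u‖⁻¹ • u
  have hw : ‖w‖ ≤ 1 := by
    rw [norm_smul, norm_inv, norm_norm]
    exact inv_mul_le_one_of_le₀ le_rfl (norm_nonneg _)
  have huw : ⟪u, w⟫ = ‖u‖ := by
    rw [real_inner_smul_right, real_inner_self_eq_norm_sq]
    rcases eq_or_ne ‖u‖ 0 with h | h
    · simp [h]
    · field_simp
  have hmono : MonotoneOn (fun r => ⟪γ r, e - c • w⟫) (Icc a b) := by
    refine (hγ.inner_const _).monotoneOn_of_ae_hasDerivWithinAt_nonneg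
      (f' := fun r => ⟪γ' r, e - c • w⟫) ?_
    filter_upwards [hderiv] with r hr
    exact ⟨by simpa using hr.1.inner ℝ (hasDerivWithinAt_const _ _ (e - c • w)),
      inner_sub_smul_nonneg_of_mul_norm_le_inner hc hr.2 hw⟩
  have hu : 0 ≤ ⟪u, e - c • w⟫ := by
    rw [inner_sub_left, sub_nonneg]
    exact hmono hs ht hst
  rw [inner_sub_right, real_inner_smul_right, huw] at hu
  linarith

theorem mul_dist_le_dist_inner_of_ae_deriv_mem_cone (hc : 0 ≤ c)
    (hγ : LipschitzOnWith K γ (Icc a b))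
    (hderiv : ∀ᵐ s ∂volume.restrict (Icc a b),
      HasDerivWithinAt γ (γ' s) (Icc a b) s ∧ c * ‖γ' s‖ ≤ ⟪γ' s, e⟫)
    {x y : ℝ} (hx : x ∈ Icc a b) (hy : y ∈ Icc a b) :
    c * dist (γ x) (γ y) ≤ dist ⟪γ x, e⟫ ⟪γ y, e⟫ := by
  wlog hxy : x ≤ y generalizing x y
  · rw [dist_comm (γ x), dist_comm ⟪γ x, e⟫]
    exact this hy hx (le_of_not_ge hxy)
  rw [dist_comm, dist_eq_norm, Real.dist_eq, abs_sub_comm, ← inner_sub_left]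
  exact (mul_norm_sub_le_inner_sub_of_ae_deriv_mem_cone hc hγ hderiv hx hy hxy).trans
    (le_abs_self _)

theorem hausdorffMeasure_image_le_of_ae_deriv_mem_cone [CompleteSpace E] [MeasurableSpace E]
    [BorelSpace E] (hc : 0 < c) (hγ : LipschitzOnWith K γ (Icc a b))
    (hderiv : ∀ᵐ s ∂volume.restrict (Icc a b),
      HasDerivWithinAt γ (γ' s) (Icc a b) s ∧ c * ‖γ' s‖ ≤ ⟪γ' s, e⟫)
    {s : Set ℝ} (hs : s ⊆ Icc a b) (hsm : MeasurableSet s) :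
    μH[1] (γ '' s) ≤ ENNReal.ofReal (c⁻¹ * ∫ x in s, ⟪γ' x, e⟫) := by
  have hderiv_s := ae_restrict_of_ae_restrict_of_subset hs hderiv
  have hint : IntegrableOn (fun x => ⟪γ' x, e⟫) s :=
    ((hγ.integrableOn_Icc_of_ae_hasDerivWithinAt (hderiv.mono fun _ => And.left)).mono_set
      hs).inner_const e
  have hnonneg : ∀ᵐ x ∂volume.restrict s, 0 ≤ ⟪γ' x, e⟫ := by
    filter_upwards [hderiv_s] with x hx
    exact (mul_nonneg hc.le (norm_nonneg _)).trans hx.2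
  have hdist : ∀ x ∈ s, ∀ y ∈ s,
      dist (γ x) (γ y) ≤ (c⁻¹.toNNReal : ℝ) * dist ⟪γ x, e⟫ ⟪γ y, e⟫ := by
    intro x hx y hy
    rw [Real.coe_toNNReal _ (inv_nonneg.2 hc.le), ← div_eq_inv_mul, le_div_iff₀' hc]
    exact mul_dist_le_dist_inner_of_ae_deriv_mem_cone hc.le hγ hderiv (hs hx) (hs hy)
  calc μH[1] (γ '' s)
      ≤ (c⁻¹.toNNReal : ℝ≥0∞) ^ (1 : ℝ) * μH[1] ((fun r => ⟪γ r, e⟫) '' s) :=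
        hausdorffMeasure_image_le_of_dist_le hdist zero_le_one
    _ = ENNReal.ofReal c⁻¹ * volume ((fun r => ⟪γ r, e⟫) '' s) := by
        rw [ENNReal.rpow_one, hausdorffMeasure_real]
        rfl
    _ ≤ ENNReal.ofReal c⁻¹ * ∫⁻ x in s, ‖⟪γ' x, e⟫‖ₑ := by
        gcongr
        refine ((hγ.inner_const e).mono hs).volume_image_le_lintegral_enorm hsm ?_
        filter_upwards [hderiv_s] with x hx
        simpa using (hx.1.inner ℝ (hasDerivWithinAt_const _ _ e)).mono hs
    _ = ENNReal.ofReal c⁻¹ * ENNReal.ofReal (∫ x in s, ⟪γ' x, e⟫) := by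
        rw [← ofReal_integral_norm_eq_lintegral_enorm hint,
          integral_congr_ae (hnonneg.mono fun x hx => Real.norm_of_nonneg hx)]
    _ = ENNReal.ofReal (c⁻¹ * ∫ x in s, ⟪γ' x, e⟫) :=
        (ENNReal.ofReal_mul (inv_nonneg.2 hc.le)).symm

end ConePath

theorem stmt_11_general {n : ℕ} (e : EuclideanSpace ℝ (Fin n)) (he : ‖e‖ = 1)
    (α : ℝ) (hα : α ∈ Set.Ioo 0 (Real.pi / 2)) (a b : ℝ)
    (γ γ' : ℝ → EuclideanSpace ℝ (Fin n)) (L : NNReal)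
    (hγ : LipschitzOnWith L γ (Set.Icc a b))
    (hderiv : ∀ᵐ s ∂(volume.restrict (Set.Icc a b)),
      HasDerivWithinAt γ (γ' s) (Set.Icc a b) s ∧ Real.cos α * ‖γ' s‖ ≤ ⟪γ' s, e⟫) :
    (∀ E : Set ℝ, E ⊆ Set.Icc a b → MeasurableSet E →
      μH[1] (γ '' E) ≤ ENNReal.ofReal ((1 / Real.cos α) * ∫ s in E, ‖γ' s‖)) ∧
    (∀ F : Set (EuclideanSpace ℝ (Fin n)), MeasurableSet F →
      ENNReal.ofReal (Real.cos α) * μH[1] (γ '' Set.Icc a b ∩ F) ≤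
        ENNReal.ofReal (∫ s in Set.Icc a b ∩ γ ⁻¹' F, ⟪γ' s, e⟫)) := by
  have hc : 0 < Real.cos α :=
    Real.cos_pos_of_mem_Ioo ⟨by linarith [hα.1, Real.pi_div_two_pos], hα.2⟩
  have hint : IntegrableOn γ' (Icc a b) :=
    hγ.integrableOn_Icc_of_ae_hasDerivWithinAt (hderiv.mono fun _ => And.left)
  refine ⟨fun E hE hEm => ?_, fun F hF => ?_⟩
  · refine (hausdorffMeasure_image_le_of_ae_deriv_mem_cone hc hγ hderiv hE hEm).trans ?_
    rw [one_div]
    refine ENNReal.ofReal_le_ofReal (mul_le_mul_of_nonneg_left ?_ (inv_nonneg.2 hc.le))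
    refine setIntegral_mono_on ((hint.mono_set hE).inner_const (𝕜 := ℝ) e)
      (hint.mono_set hE).norm hEm fun x _ => ?_
    simpa [he] using real_inner_le_norm (γ' x) e
  · rw [← image_inter_preimage]
    have hEm := hγ.continuousOn.measurableSet_inter_preimage measurableSet_Icc hF
    calc ENNReal.ofReal (Real.cos α) * μH[1] (γ '' (Icc a b ∩ γ ⁻¹' F))
        ≤ ENNReal.ofReal (Real.cos α) * ENNReal.ofReal
          ((Real.cos α)⁻¹ * ∫ s in Icc a b ∩ γ ⁻¹' F, ⟪γ' s, e⟫) := by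
          gcongr
          exact hausdorffMeasure_image_le_of_ae_deriv_mem_cone hc hγ hderiv inter_subset_left hEm
      _ = ENNReal.ofReal (∫ s in Icc a b ∩ γ ⁻¹' F, ⟪γ' s, e⟫) := by
          rw [← ENNReal.ofReal_mul hc.le, mul_inv_cancel_left₀ hc.ne']

/-- If `γ` is a Lipschitz path on a compact interval `J = [a,b]` whose
derivative lies a.e. in the cone `C(e,α) = {v : v·e ≥ cos(α)·|v|}`, then for every Borel
`E ⊆ J` one has `ℋ¹(γ(E)) ≤ (1/cos α)·∫_E |γ'|`, and for every Borel set `F ⊆ ℝⁿ`,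
`cos(α)·ℋ¹(γ(J) ∩ F) ≤ ∫_{γ⁻¹(F)} γ'·e`. -/
theorem stmt_11 {n : ℕ} (e : EuclideanSpace ℝ (Fin n)) (he : ‖e‖ = 1)
    (α : ℝ) (hα : α ∈ Set.Ioo 0 (Real.pi / 2)) (a b : ℝ) (hab : a ≤ b)
    (γ γ' : ℝ → EuclideanSpace ℝ (Fin n)) (L : NNReal)
    (hγ : LipschitzOnWith L γ (Set.Icc a b))
    (hderiv : ∀ᵐ s ∂(volume.restrict (Set.Icc a b)),
      HasDerivWithinAt γ (γ' s) (Set.Icc a b) s ∧ Real.cos α * ‖γ' s‖ ≤ ⟪γ' s, e⟫) :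
    (∀ E : Set ℝ, E ⊆ Set.Icc a b → MeasurableSet E →
      μH[1] (γ '' E) ≤ ENNReal.ofReal ((1 / Real.cos α) * ∫ s in E, ‖γ' s‖)) ∧
    (∀ F : Set (EuclideanSpace ℝ (Fin n)), MeasurableSet F →
      ENNReal.ofReal (Real.cos α) * μH[1] (γ '' Set.Icc a b ∩ F) ≤
        ENNReal.ofReal (∫ s in Set.Icc a b ∩ γ ⁻¹' F, ⟪γ' s, e⟫)) :=
  stmt_11_general e he α hα a b γ γ' L hγ hderiv
end

section
/- Fix x₀ in the open unit ball B of ℝⁿ. Define p : ℝⁿ \ {x₀} → ℝⁿ by p(x) := x for x ∉ B, and for x ∈ B let p(x) := x₀ + t w where w := (x − x₀)/|x − x₀| and t := √(1 + ⟨x₀,w⟩² − |x₀|²) − ⟨x₀,w⟩ (so that |p(x)| = 1). Then p is a retraction of ℝⁿ \ {x₀} onto ℝⁿ \ B, and there is a constant C depending only on n such that the derivative satisfies ‖dp(x)‖ ≤ C / |x − x₀| for every x in the closed unit ball \bar{B} with x ≠ x₀. -/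
open Metric Set MeasureTheory
open scoped RealInnerProductSpace

/-- The radial retraction of `ℝⁿ \ {x₀}` onto the complement of the open unit ball: points
outside the ball are fixed, while a point `x` of the ball is sent to the intersection of the
unit sphere with the half-line from `x₀` through `x`. -/
noncomputable def sphereRetract {n : ℕ} (x₀ x : EuclideanSpace ℝ (Fin n)) :
    EuclideanSpace ℝ (Fin n) :=
  if ‖x‖ < 1 then
    letI w := ‖x - x₀‖⁻¹ • (x - x₀)
    x₀ + (Real.sqrt (1 + ⟪x₀, w⟫ ^ 2 - ‖x₀‖ ^ 2) - ⟪x₀, w⟫) • w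
  else x

namespace SR14

variable {n : ℕ}

noncomputable def w (x₀ y : EuclideanSpace ℝ (Fin n)) : EuclideanSpace ℝ (Fin n) :=
  ‖y - x₀‖⁻¹ • (y - x₀)

noncomputable def a (x₀ y : EuclideanSpace ℝ (Fin n)) : ℝ := ⟪x₀, w x₀ y⟫

noncomputable def s (x₀ y : EuclideanSpace ℝ (Fin n)) : ℝ := 1 + a x₀ y ^ 2 - ‖x₀‖ ^ 2

noncomputable def g (x₀ y : EuclideanSpace ℝ (Fin n)) : EuclideanSpace ℝ (Fin n) :=
  x₀ + (Real.sqrt (s x₀ y) - a x₀ y) • w x₀ y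

theorem sphereRetract_def (x₀ y : EuclideanSpace ℝ (Fin n)) :
    sphereRetract x₀ y = if ‖y‖ < 1 then g x₀ y else y := rfl

variable {x₀ y : EuclideanSpace ℝ (Fin n)}

theorem norm_w (h : y ≠ x₀) : ‖w x₀ y‖ = 1 :=
  norm_smul_inv_norm (sub_ne_zero.2 h)

theorem abs_a_le (h : y ≠ x₀) : |a x₀ y| ≤ ‖x₀‖ := by
  calc |a x₀ y| ≤ ‖x₀‖ * ‖w x₀ y‖ := abs_real_inner_le_norm _ _
    _ = ‖x₀‖ := by rw [norm_w h, mul_one]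

theorem s_pos (h0 : ‖x₀‖ < 1) : 0 < s x₀ y := by
  have h1 : 0 ≤ ‖x₀‖ := norm_nonneg _
  have h2 : (0:ℝ) ≤ a x₀ y ^ 2 := sq_nonneg _
  unfold s; nlinarith

theorem abs_a_le_sqrt_s (h0 : ‖x₀‖ < 1) (h : y ≠ x₀) : |a x₀ y| ≤ Real.sqrt (s x₀ y) := by
  have h2 : a x₀ y ^ 2 ≤ s x₀ y := by
    have := abs_a_le (x₀ := x₀) h
    have h1 : ‖x₀‖ ≤ 1 := h0.le
    unfold s; nlinarith [sq_abs (a x₀ y), norm_nonneg x₀]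
  calc |a x₀ y| = Real.sqrt (a x₀ y ^ 2) := (Real.sqrt_sq_eq_abs _).symm
    _ ≤ Real.sqrt (s x₀ y) := Real.sqrt_le_sqrt h2

theorem sqrt_s_le (h0 : ‖x₀‖ < 1) (h : y ≠ x₀) : Real.sqrt (s x₀ y) ≤ 2 := by
  have h1 : s x₀ y ≤ 4 := by
    have := abs_a_le (x₀ := x₀) h
    unfold s
    nlinarith [sq_abs (a x₀ y), abs_nonneg (a x₀ y), norm_nonneg x₀,
      mul_self_le_mul_self (abs_nonneg (a x₀ y)) this]
  calc Real.sqrt (s x₀ y) ≤ Real.sqrt 4 := Real.sqrt_le_sqrt h1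
    _ = 2 := by rw [show (4:ℝ) = 2 ^ 2 by norm_num, Real.sqrt_sq (by norm_num : (0:ℝ) ≤ 2)]

theorem norm_g (h0 : ‖x₀‖ < 1) (h : y ≠ x₀) : ‖g x₀ y‖ = 1 := by
  have hw : ‖w x₀ y‖ = 1 := norm_w h
  have hsq : Real.sqrt (s x₀ y) ^ 2 = s x₀ y := Real.sq_sqrt (s_pos h0).le
  have hst : s x₀ y = 1 + a x₀ y ^ 2 - ‖x₀‖ ^ 2 := rfl
  have h1 : ‖g x₀ y‖ ^ 2 = 1 := by
    rw [g, norm_add_sq_real, real_inner_smul_right, norm_smul, Real.norm_eq_abs, hw, mul_one,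
      show (inner ℝ x₀ (w x₀ y) : ℝ) = a x₀ y from rfl]
    nlinarith [sq_abs (Real.sqrt (s x₀ y) - a x₀ y)]
  calc ‖g x₀ y‖ = Real.sqrt (‖g x₀ y‖ ^ 2) := (Real.sqrt_sq (norm_nonneg _)).symm
    _ = 1 := by rw [h1, Real.sqrt_one]


theorem g_sphere (h0 : ‖x₀‖ < 1) (h : y ≠ x₀) (hn : ‖y‖ = 1) : g x₀ y = y := by
  have hy0 : y - x₀ ≠ 0 := sub_ne_zero.2 h
  have hr : 0 < ‖y - x₀‖ := norm_pos_iff.2 hy0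
  have hw : ‖w x₀ y‖ = 1 := norm_w h
  have hxd : x₀ + ‖y - x₀‖ • w x₀ y = y := by
    rw [w, smul_smul, mul_inv_cancel₀ hr.ne', one_smul, add_sub_cancel]
  have hwy : (⟪y, w x₀ y⟫ : ℝ) = a x₀ y + ‖y - x₀‖ := by
    have h1 : (⟪y - x₀, w x₀ y⟫ : ℝ) = ‖y - x₀‖ := by
      rw [w, real_inner_smul_right, real_inner_self_eq_norm_sq, sq, ← mul_assoc,
        inv_mul_cancel₀ hr.ne', one_mul]
    rw [inner_sub_left] at h1
    have h2 : (⟪x₀, w x₀ y⟫ : ℝ) = a x₀ y := rfl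
    rw [h2] at h1
    linarith
  have hpos : (0:ℝ) < ⟪y, w x₀ y⟫ := by
    rw [w, real_inner_smul_right, inner_sub_right, real_inner_self_eq_norm_sq, hn]
    have h1 : (⟪y, x₀⟫ : ℝ) ≤ ‖x₀‖ := by
      calc (⟪y, x₀⟫ : ℝ) ≤ ‖y‖ * ‖x₀‖ := real_inner_le_norm _ _
        _ = ‖x₀‖ := by rw [hn, one_mul]
    have h2 : (0:ℝ) < ‖y - x₀‖⁻¹ := inv_pos.2 hr
    nlinarith
  have hsum : 0 < ‖y - x₀‖ + a x₀ y := by rw [hwy] at hpos; linarith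
  have hs_eq : s x₀ y = (‖y - x₀‖ + a x₀ y) ^ 2 := by
    have h1 : (1:ℝ) = ‖x₀ + ‖y - x₀‖ • w x₀ y‖ ^ 2 := by rw [hxd, hn, one_pow]
    rw [norm_add_sq_real, real_inner_smul_right, norm_smul, Real.norm_eq_abs,
      abs_of_pos hr, hw, mul_one, show (inner ℝ x₀ (w x₀ y) : ℝ) = a x₀ y from rfl] at h1
    unfold s; nlinarith
  have hsqrt : Real.sqrt (s x₀ y) = ‖y - x₀‖ + a x₀ y := by
    rw [hs_eq, Real.sqrt_sq hsum.le]
  rw [g, hsqrt, add_sub_cancel_right, hxd]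

theorem contDiffAt_g (h0 : ‖x₀‖ < 1) (h : y ≠ x₀) : ContDiffAt ℝ (⊤ : ℕ∞) (g x₀) y := by
  have hy0 : y - x₀ ≠ 0 := sub_ne_zero.2 h
  have c1 : ContDiffAt ℝ (⊤ : ℕ∞) (fun z : EuclideanSpace ℝ (Fin n) => z - x₀) y :=
    contDiffAt_id.sub contDiffAt_const
  have c2 : ContDiffAt ℝ (⊤ : ℕ∞) (fun z : EuclideanSpace ℝ (Fin n) => ‖z - x₀‖) y := c1.norm ℝ hy0
  have c3 : ContDiffAt ℝ (⊤ : ℕ∞) (fun z : EuclideanSpace ℝ (Fin n) => ‖z - x₀‖⁻¹) y :=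
    c2.inv (norm_ne_zero_iff.2 hy0)
  have cw : ContDiffAt ℝ (⊤ : ℕ∞) (w x₀) y := c3.smul c1
  have ca : ContDiffAt ℝ (⊤ : ℕ∞) (a x₀) y := (contDiffAt_const (c := x₀)).inner ℝ cw
  have cs : ContDiffAt ℝ (⊤ : ℕ∞) (s x₀) y := (contDiffAt_const.add (ca.pow 2)).sub contDiffAt_const
  have cq : ContDiffAt ℝ (⊤ : ℕ∞) (fun z => Real.sqrt (s x₀ z)) y := cs.sqrt (s_pos h0).ne'
  exact contDiffAt_const.add ((cq.sub ca).smul cw)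


set_option maxHeartbeats 1000000 in
theorem hasFDerivAt_g (h0 : ‖x₀‖ < 1) (h : y ≠ x₀) :
    ∃ L : EuclideanSpace ℝ (Fin n) →L[ℝ] EuclideanSpace ℝ (Fin n), HasFDerivAt (g x₀) L y ∧ ‖L‖ ≤ 10 / ‖y - x₀‖ := by
  classical
  have hy0 : y - x₀ ≠ 0 := sub_ne_zero.2 h
  have hr : 0 < ‖y - x₀‖ := norm_pos_iff.2 hy0
  -- derivative of z ↦ z - x₀
  have hu : HasFDerivAt (fun z : EuclideanSpace ℝ (Fin n) => z - x₀) (ContinuousLinearMap.id ℝ (EuclideanSpace ℝ (Fin n))) y :=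
    (hasFDerivAt_id y).sub_const x₀
  -- derivative of the norm
  have hNdiff : DifferentiableAt ℝ (fun z : EuclideanSpace ℝ (Fin n) => ‖z - x₀‖) y :=
    (differentiableAt_id.sub (differentiableAt_const x₀)).norm ℝ hy0
  set N := fderiv ℝ (fun z : EuclideanSpace ℝ (Fin n) => ‖z - x₀‖) y with hNdef
  have hN : HasFDerivAt (fun z : EuclideanSpace ℝ (Fin n) => ‖z - x₀‖) N y := hNdiff.hasFDerivAt
  have hlip : LipschitzWith 1 (fun z : EuclideanSpace ℝ (Fin n) => ‖z - x₀‖) := by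
    refine LipschitzWith.of_dist_le_mul fun p q => ?_
    rw [NNReal.coe_one, one_mul, Real.dist_eq, dist_eq_norm]
    calc |‖p - x₀‖ - ‖q - x₀‖| ≤ ‖(p - x₀) - (q - x₀)‖ := abs_norm_sub_norm_le _ _
      _ = ‖p - q‖ := by rw [sub_sub_sub_cancel_right]
  have hNle : ‖N‖ ≤ 1 := by simpa using hN.le_of_lipschitz hlip
  -- derivative of the inverse norm
  have hInv : HasFDerivAt (fun z : EuclideanSpace ℝ (Fin n) => ‖z - x₀‖⁻¹) ((-(‖y - x₀‖ ^ 2)⁻¹) • N) y := by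
    have := (hasDerivAt_inv hr.ne').comp_hasFDerivAt y hN
    simpa [Function.comp_def] using this
  have hInvle : ‖(-(‖y - x₀‖ ^ 2)⁻¹) • N‖ ≤ (‖y - x₀‖ ^ 2)⁻¹ := by
    rw [norm_smul, norm_neg, norm_inv, norm_pow, norm_norm]
    calc (‖y - x₀‖ ^ 2)⁻¹ * ‖N‖ ≤ (‖y - x₀‖ ^ 2)⁻¹ * 1 := by
          apply mul_le_mul_of_nonneg_left hNle (by positivity)
      _ = (‖y - x₀‖ ^ 2)⁻¹ := mul_one _
  -- derivative of w
  set W : EuclideanSpace ℝ (Fin n) →L[ℝ] EuclideanSpace ℝ (Fin n) := ‖y - x₀‖⁻¹ • ContinuousLinearMap.id ℝ (EuclideanSpace ℝ (Fin n))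
      + ((-(‖y - x₀‖ ^ 2)⁻¹) • N).smulRight (y - x₀) with hWdef
  have hW : HasFDerivAt (w x₀) W y := hInv.smul hu
  have hWle : ‖W‖ ≤ 2 * ‖y - x₀‖⁻¹ := by
    calc ‖W‖ ≤ ‖‖y - x₀‖⁻¹ • ContinuousLinearMap.id ℝ (EuclideanSpace ℝ (Fin n))‖
          + ‖((-(‖y - x₀‖ ^ 2)⁻¹) • N).smulRight (y - x₀)‖ := norm_add_le _ _
      _ ≤ ‖y - x₀‖⁻¹ * 1 + (‖y - x₀‖ ^ 2)⁻¹ * ‖y - x₀‖ := by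
          gcongr
          · calc ‖‖y - x₀‖⁻¹ • ContinuousLinearMap.id ℝ (EuclideanSpace ℝ (Fin n))‖
                ≤ ‖(‖y - x₀‖⁻¹ : ℝ)‖ * ‖ContinuousLinearMap.id ℝ (EuclideanSpace ℝ (Fin n))‖ :=
                  ContinuousLinearMap.opNorm_smul_le _ _
              _ ≤ ‖y - x₀‖⁻¹ * 1 := by
                  rw [norm_inv, norm_norm]
                  exact mul_le_mul_of_nonneg_left ContinuousLinearMap.norm_id_le (by positivity)
          · rw [ContinuousLinearMap.norm_smulRight_apply]
            exact mul_le_mul_of_nonneg_right hInvle (norm_nonneg _)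
      _ = 2 * ‖y - x₀‖⁻¹ := by
          have hx : (‖y - x₀‖ ^ 2)⁻¹ * ‖y - x₀‖ = ‖y - x₀‖⁻¹ := by
            rw [sq, mul_inv, mul_assoc, inv_mul_cancel₀ hr.ne', mul_one]
          rw [hx]; ring
  -- derivative of a
  set A : EuclideanSpace ℝ (Fin n) →L[ℝ] ℝ := (innerSL ℝ x₀).comp W with hAdef
  have hA : HasFDerivAt (a x₀) A y := ((innerSL ℝ x₀).hasFDerivAt).comp y hW
  have hAle : ‖A‖ ≤ 2 * ‖y - x₀‖⁻¹ := by
    calc ‖A‖ ≤ ‖innerSL ℝ x₀‖ * ‖W‖ := ContinuousLinearMap.opNorm_comp_le _ _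
      _ = ‖x₀‖ * ‖W‖ := by rw [innerSL_apply_norm]
      _ ≤ 1 * (2 * ‖y - x₀‖⁻¹) := by
          apply mul_le_mul h0.le hWle (norm_nonneg _) zero_le_one
      _ = 2 * ‖y - x₀‖⁻¹ := one_mul _
  -- derivative of s
  set S : EuclideanSpace ℝ (Fin n) →L[ℝ] ℝ := a x₀ y • A + a x₀ y • A with hSdef
  have hS : HasFDerivAt (s x₀) S y := by
    have h2 : (fun z => 1 + a x₀ z * a x₀ z - ‖x₀‖ ^ 2) = s x₀ := by
      funext z; simp only [SR14.s, sq]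
    rw [← h2]
    exact ((hA.mul hA).const_add 1).sub_const (‖x₀‖ ^ 2)
  have hSle : ‖S‖ ≤ 2 * Real.sqrt (s x₀ y) * ‖A‖ := by
    calc ‖S‖ ≤ ‖a x₀ y • A‖ + ‖a x₀ y • A‖ := norm_add_le _ _
      _ ≤ ‖a x₀ y‖ * ‖A‖ + ‖a x₀ y‖ * ‖A‖ := add_le_add (ContinuousLinearMap.opNorm_smul_le _ _) (ContinuousLinearMap.opNorm_smul_le _ _)
      _ = 2 * (|a x₀ y| * ‖A‖) := by rw [Real.norm_eq_abs]; ring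
      _ ≤ 2 * (Real.sqrt (s x₀ y) * ‖A‖) := by
          have := abs_a_le_sqrt_s h0 h
          gcongr
      _ = 2 * Real.sqrt (s x₀ y) * ‖A‖ := by ring
  -- derivative of sqrt ∘ s
  have hsq_pos : 0 < Real.sqrt (s x₀ y) := Real.sqrt_pos.2 (s_pos h0)
  have hQ : HasFDerivAt (fun z => Real.sqrt (s x₀ z)) ((1 / (2 * Real.sqrt (s x₀ y))) • S) y :=
    hS.sqrt (s_pos h0).ne'
  have hQle : ‖(1 / (2 * Real.sqrt (s x₀ y))) • S‖ ≤ 2 * ‖y - x₀‖⁻¹ := by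
    calc ‖(1 / (2 * Real.sqrt (s x₀ y))) • S‖
        ≤ ‖(1 / (2 * Real.sqrt (s x₀ y)) : ℝ)‖ * ‖S‖ := ContinuousLinearMap.opNorm_smul_le _ _
      _ = 1 / (2 * Real.sqrt (s x₀ y)) * ‖S‖ := by
          rw [Real.norm_eq_abs, abs_of_pos (by positivity)]
      _
        ≤ 1 / (2 * Real.sqrt (s x₀ y)) * (2 * Real.sqrt (s x₀ y) * ‖A‖) := by
          apply mul_le_mul_of_nonneg_left hSle (by positivity)
      _ = ‖A‖ := by field_simp
      _ ≤ 2 * ‖y - x₀‖⁻¹ := hAle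
  -- derivative of the coefficient φ = √s - a
  set Φ : EuclideanSpace ℝ (Fin n) →L[ℝ] ℝ := (1 / (2 * Real.sqrt (s x₀ y))) • S - A with hΦdef
  have hφ : HasFDerivAt (fun z => Real.sqrt (s x₀ z) - a x₀ z) Φ y := hQ.sub hA
  have hφle : ‖Φ‖ ≤ 4 * ‖y - x₀‖⁻¹ := by
    calc ‖Φ‖ ≤ ‖(1 / (2 * Real.sqrt (s x₀ y))) • S‖ + ‖A‖ := norm_sub_le _ _
      _ ≤ 2 * ‖y - x₀‖⁻¹ + 2 * ‖y - x₀‖⁻¹ := add_le_add hQle hAle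
      _ = 4 * ‖y - x₀‖⁻¹ := by ring
  have hcoef : |Real.sqrt (s x₀ y) - a x₀ y| ≤ 3 := by
    have h1 := sqrt_s_le h0 h
    have h2 := abs_a_le (x₀ := x₀) h
    have h3 : |a x₀ y| ≤ 1 := h2.trans h0.le
    rw [abs_sub_comm] at *
    calc |a x₀ y - Real.sqrt (s x₀ y)| ≤ |a x₀ y| + |Real.sqrt (s x₀ y)| := abs_sub _ _
      _ ≤ 1 + 2 := by
          rw [abs_of_nonneg (Real.sqrt_nonneg _)]
          exact add_le_add h3 h1
      _ = 3 := by norm_num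
  -- final assembly
  set L : EuclideanSpace ℝ (Fin n) →L[ℝ] EuclideanSpace ℝ (Fin n) := (Real.sqrt (s x₀ y) - a x₀ y) • W + Φ.smulRight (w x₀ y) with hLdef
  refine ⟨L, ?_, ?_⟩
  · have := (hφ.smul hW).const_add x₀
    exact this
  · calc ‖L‖ ≤ ‖(Real.sqrt (s x₀ y) - a x₀ y) • W‖ + ‖Φ.smulRight (w x₀ y)‖ := norm_add_le _ _
      _ ≤ 3 * (2 * ‖y - x₀‖⁻¹) + 4 * ‖y - x₀‖⁻¹ * 1 := by
          gcongr
          · calc ‖(Real.sqrt (s x₀ y) - a x₀ y) • W‖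
                ≤ ‖(Real.sqrt (s x₀ y) - a x₀ y : ℝ)‖ * ‖W‖ := ContinuousLinearMap.opNorm_smul_le _ _
              _ ≤ 3 * (2 * ‖y - x₀‖⁻¹) := by
                  rw [Real.norm_eq_abs]
                  exact mul_le_mul hcoef hWle (norm_nonneg _) (by norm_num)
          · rw [ContinuousLinearMap.norm_smulRight_apply, norm_w h]
            exact mul_le_mul_of_nonneg_right hφle (by norm_num)
      _ = 10 / ‖y - x₀‖ := by rw [div_eq_mul_inv]; ring

set_option maxHeartbeats 1000000 in
theorem not_diff (h0 : ‖x₀‖ < 1) (hn : ‖y‖ = 1) :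
    ¬ DifferentiableAt ℝ (sphereRetract x₀) y := by
  intro hd
  have hy : y ≠ x₀ := by
    intro hEq; rw [hEq] at hn; exact absurd hn h0.ne
  have hr : 0 < ‖y - x₀‖ := norm_pos_iff.2 (sub_ne_zero.2 hy)
  set p := sphereRetract x₀ with hp
  have hγ : DifferentiableAt ℝ (fun t : ℝ => y + t • y) 0 :=
    (differentiableAt_id.smul_const y).const_add y
  have hγ0 : (fun t : ℝ => y + t • y) 0 = y := by simp
  have hd' : DifferentiableAt ℝ p ((fun t : ℝ => y + t • y) 0) := by rwa [hγ0]
  have hcomp : DifferentiableAt ℝ (fun t : ℝ => p (y + t • y)) 0 := by have := hd'.comp 0 hγ; exact this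
  have hh : DifferentiableAt ℝ (fun t : ℝ => ‖p (y + t • y)‖ ^ 2) 0 := hcomp.norm_sq ℝ
  have hdd : HasDerivAt (fun t : ℝ => ‖p (y + t • y)‖ ^ 2)
      (deriv (fun t : ℝ => ‖p (y + t • y)‖ ^ 2) 0) 0 := hh.hasDerivAt
  set d := deriv (fun t : ℝ => ‖p (y + t • y)‖ ^ 2) 0 with hddef
  set ε := min (1/2 : ℝ) (‖y - x₀‖ / 2) with hεdef
  have hε : 0 < ε := lt_min (by norm_num) (by positivity)
  have hεle : ε ≤ 1/2 := min_le_left _ _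
  have hnorm : ∀ t : ℝ, ‖y + t • y‖ = |1 + t| := by
    intro t
    rw [show y + t • y = (1 + t) • y by rw [add_smul, one_smul], norm_smul,
      Real.norm_eq_abs, hn, mul_one]
  have hne : ∀ t : ℝ, |t| < ε → y + t • y ≠ x₀ := by
    intro t ht hEq
    have h1 : ‖y - x₀‖ = |t| := by
      rw [← hEq, show y - (y + t • y) = (-t) • y by module, norm_smul,
        Real.norm_eq_abs, abs_neg, hn, mul_one]
    have h2 : ε ≤ ‖y - x₀‖ / 2 := min_le_right _ _
    rw [h1] at h2 hr
    linarith
  have hpy : p y = y := by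
    rw [hp, sphereRetract_def, if_neg (by rw [hn]; exact lt_irrefl 1)]
  have hP0 : ‖p (y + (0:ℝ) • y)‖ ^ 2 = 1 := by
    rw [zero_smul, add_zero, hpy, hn, one_pow]
  -- left derivative is 0
  have hleft : HasDerivWithinAt (fun t : ℝ => ‖p (y + t • y)‖ ^ 2) 0 (Iic 0) 0 := by
    have hc : HasDerivWithinAt (fun _ : ℝ => (1:ℝ)) 0 (Iic 0) 0 := hasDerivWithinAt_const _ _ _
    refine hc.congr_of_eventuallyEq ?_ hP0
    filter_upwards [mem_nhdsWithin_of_mem_nhds (Ioo_mem_nhds (neg_lt_zero.2 hε) hε),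
      self_mem_nhdsWithin] with t htI ht0
    rcases eq_or_lt_of_le (mem_Iic.1 ht0) with rfl | hlt
    · exact hP0
    · have habs : |t| < ε := abs_lt.2 ⟨htI.1, htI.2⟩
      have h1 : ‖y + t • y‖ < 1 := by
        rw [hnorm t, abs_of_pos (by nlinarith [htI.1] : (0:ℝ) < 1 + t)]
        linarith
      have h2 : y + t • y ≠ x₀ := hne t habs
      rw [hp, sphereRetract_def, if_pos h1, norm_g h0 h2, one_pow]
  have hd0 : d = 0 :=
    ((uniqueDiffOn_Iic (0:ℝ)) 0 self_mem_Iic).eq_deriv _ hdd.hasDerivWithinAt hleft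
  -- right derivative is 2
  have hq : HasDerivAt (fun t : ℝ => (1 + t) ^ 2) 2 0 := by
    have h1 := ((hasDerivAt_id (0:ℝ)).const_add 1).pow 2
    norm_num at h1
    exact h1
  have hright : HasDerivWithinAt (fun t : ℝ => ‖p (y + t • y)‖ ^ 2) 2 (Ici 0) 0 := by
    refine hq.hasDerivWithinAt.congr_of_eventuallyEq ?_ (by rw [hP0]; norm_num)
    filter_upwards [mem_nhdsWithin_of_mem_nhds (Ioo_mem_nhds (neg_lt_zero.2 hε) hε),
      self_mem_nhdsWithin] with t htI ht0
    have ht0' : (0:ℝ) ≤ t := mem_Ici.1 ht0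
    have h1 : ¬ ‖y + t • y‖ < 1 := by
      rw [hnorm t, abs_of_pos (by linarith : (0:ℝ) < 1 + t)]
      linarith
    rw [hp, sphereRetract_def, if_neg h1, hnorm t, sq_abs]
  have hd2 : d = 2 :=
    ((uniqueDiffOn_Ici (0:ℝ)) 0 self_mem_Ici).eq_deriv _ hdd.hasDerivWithinAt hright
  rw [hd0] at hd2
  norm_num at hd2

end SR14

/-- For `x₀` in the open unit ball `B`, the map `p = sphereRetract x₀` is a
retraction of `ℝⁿ \ {x₀}` onto `ℝⁿ \ B` (continuous off `x₀`, identity outside `B`, with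
values outside `B`, smooth on `B \ {x₀}`), and there is a constant `C > 0` depending only on
`n` such that `‖dp(x)‖ ≤ C / ‖x − x₀‖` for every `x` in the closed unit ball, `x ≠ x₀`. -/
theorem stmt_14 (n : ℕ) :
    ∃ C : ℝ, 0 < C ∧
      ∀ x₀ : EuclideanSpace ℝ (Fin n), x₀ ∈ ball (0 : EuclideanSpace ℝ (Fin n)) 1 →
        ContinuousOn (sphereRetract x₀) {x₀}ᶜ ∧
        (∀ x, x ∉ ball (0 : EuclideanSpace ℝ (Fin n)) 1 → sphereRetract x₀ x = x) ∧
        (∀ x, x ≠ x₀ → sphereRetract x₀ x ∉ ball (0 : EuclideanSpace ℝ (Fin n)) 1) ∧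
        ContDiffOn ℝ (⊤ : ℕ∞) (sphereRetract x₀) (ball 0 1 \ {x₀}) ∧
        (∀ x ∈ closedBall (0 : EuclideanSpace ℝ (Fin n)) 1, x ≠ x₀ →
          ‖fderiv ℝ (sphereRetract x₀) x‖ ≤ C / ‖x - x₀‖) := by
  classical
  refine ⟨10, by norm_num, fun x₀ hx₀ => ?_⟩
  have h0 : ‖x₀‖ < 1 := mem_ball_zero_iff.1 hx₀
  refine ⟨?_, ?_, ?_, ?_, ?_⟩
  · -- continuity off x₀
    have hfun : sphereRetract x₀ = fun z => if ‖z‖ < 1 then SR14.g x₀ z else z := by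
      funext z; exact SR14.sphereRetract_def x₀ z
    rw [hfun]
    refine ContinuousOn.if (p := fun z : EuclideanSpace ℝ (Fin n) => ‖z‖ < 1)
      (f := SR14.g x₀) (g := fun z => z) ?_ ?_ ?_
    · rintro z ⟨hz1, hz2⟩
      have hz1' : z ≠ x₀ := hz1
      have hcl : z ∈ closure {a : EuclideanSpace ℝ (Fin n) | ‖a‖ < 1} := hz2.1
      have hle : ‖z‖ ≤ 1 := by
        have hsub : closure {a : EuclideanSpace ℝ (Fin n) | ‖a‖ < 1}
            ⊆ {a : EuclideanSpace ℝ (Fin n) | ‖a‖ ≤ 1} :=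
          closure_minimal (fun a (ha : ‖a‖ < 1) => show ‖a‖ ≤ 1 from le_of_lt ha)
            (isClosed_le continuous_norm continuous_const)
        exact hsub hcl
      have hnlt : ¬ ‖z‖ < 1 := by
        intro hlt
        have hopen : IsOpen {a : EuclideanSpace ℝ (Fin n) | ‖a‖ < 1} :=
          isOpen_lt continuous_norm continuous_const
        exact hz2.2 (by rwa [hopen.interior_eq])
      exact SR14.g_sphere h0 hz1' (le_antisymm hle (not_lt.1 hnlt))
    · rintro z ⟨hz1, _⟩
      exact ((SR14.contDiffAt_g h0 hz1).continuousAt).continuousWithinAt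
    · exact fun z _ => continuousWithinAt_id
  · -- identity outside the ball
    intro x hx
    rw [SR14.sphereRetract_def, if_neg (by rwa [mem_ball_zero_iff] at hx)]
  · -- values outside the ball
    intro x hx
    by_cases hlt : ‖x‖ < 1
    · rw [SR14.sphereRetract_def, if_pos hlt, mem_ball_zero_iff, SR14.norm_g h0 hx]
      exact lt_irrefl 1
    · rw [SR14.sphereRetract_def, if_neg hlt, mem_ball_zero_iff]
      exact hlt
  · -- smoothness on the ball minus the center
    intro z hz
    obtain ⟨hz1, hz2⟩ := hz
    have hz2' : z ≠ x₀ := hz2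
    refine ContDiffAt.contDiffWithinAt ?_
    refine (SR14.contDiffAt_g h0 hz2').congr_of_eventuallyEq ?_
    filter_upwards [isOpen_ball.mem_nhds hz1] with v hv
    rw [SR14.sphereRetract_def, if_pos (mem_ball_zero_iff.1 hv)]
  · -- derivative bound
    intro x hx hne
    have hxr : 0 < ‖x - x₀‖ := norm_pos_iff.2 (sub_ne_zero.2 hne)
    rcases lt_or_eq_of_le (mem_closedBall_zero_iff.1 hx) with hlt | heq
    · obtain ⟨L, hL, hLle⟩ := SR14.hasFDerivAt_g h0 hne
      have hev : sphereRetract x₀ =ᶠ[nhds x] SR14.g x₀ := by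
        filter_upwards [isOpen_ball.mem_nhds (mem_ball_zero_iff.2 hlt)] with v hv
        rw [SR14.sphereRetract_def, if_pos (mem_ball_zero_iff.1 hv)]
      rw [hev.fderiv_eq, hL.fderiv]
      exact hLle
    · rw [fderiv_zero_of_not_differentiableAt (SR14.not_diff h0 heq)]
      rw [norm_zero]
      positivity
end
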